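/- arXiv:1308.5085 — 8 statements merged into one kernel-verified Lean document; each statement's English description precedes it below -/
import Mathlib

section
/- Let k be a field, R = k[X,Y,Z]/(X^{n+1} - YZ) with n ≥ 0, and char k = p > 0. For every e ≥ 0, writing q = p^e and r for the smallest non-negative residue of q modulo n+1, the k-dimension of R/(X^q, Y^q, Z^q) equals (2 - 1/(n+1))·q² - r + r²/(n+1). -/
/-!
Write `N = n + 1`. Modulo `X^N - YZ` the monomial `X^a Y^b Z^c` is congruent to
`X^(a + N t) Y^(b - t) Z^(c - t)` with `t = min b c`, so its class is determined by the pair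
`(a + N t, b - c) ∈ ℕ × ℤ`. Modulo `X^q, Y^q, Z^q` as well, the reduced monomial
`X^a Y^(d⁺) Z^(d⁻)` survives exactly when `a < q` and `a + N |d| < N q`. These standard monomials
span the quotient by the reduction above, and they are independent because the linear map sending
each monomial to its reduced form, or to `0` when that form is not standard, kills the ideal.
For fixed `a < q` there are `2 (q - ⌊a/N⌋) - 1` admissible `d`, and summing `⌊a/N⌋` over `a < q`
with `q = N m + r` gives the formula.
-/

open MvPolynomial Finset

namespace AnSingularity

noncomputable section

variable {k : Type*} [CommRing k] {N q : ℕ}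

def mono (a b c : ℕ) : MvPolynomial (Fin 3) k := X 0 ^ a * X 1 ^ b * X 2 ^ c

variable (k) in
def anIdeal (N q : ℕ) : Ideal (MvPolynomial (Fin 3) k) :=
  Ideal.span {X 0 ^ N - X 1 * X 2, X 0 ^ q, X 1 ^ q, X 2 ^ q}

def key (N a b c : ℕ) : ℕ × ℤ := (a + N * min b c, (b : ℤ) - c)

def IsStd (N q : ℕ) (x : ℕ × ℤ) : Prop := x.1 < q ∧ x.1 + N * x.2.natAbs < N * q

instance : DecidablePred (IsStd N q) := fun _ => inferInstanceAs (Decidable (_ ∧ _))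

def monoOf (x : ℕ × ℤ) : MvPolynomial (Fin 3) k := mono x.1 x.2.toNat (-x.2).toNat

lemma key_add_left (a b c : ℕ) : key N (a + N) b c = key N a (b + 1) (c + 1) := by
  simp only [key, Nat.add_min_add_right, Prod.mk.injEq]
  constructor
  · ring
  · push_cast; ring

lemma key_toNat_neg_toNat (x : ℕ × ℤ) : key N x.1 x.2.toNat (-x.2).toNat = x := by
  simp only [key]
  ext <;> simp; omega

lemma isStd_key_iff {a b c : ℕ} :
    IsStd N q (key N a b c) ↔ a + N * min b c < q ∧ a + N * max b c < N * q := by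
  have h : N * min b c + N * ((b : ℤ) - c).natAbs = N * max b c := by
    rw [← mul_add]; congr 1; omega
  simp only [IsStd, key]
  omega

lemma not_isStd_key_of_le_max {a b c : ℕ} (h : q ≤ max b c) : ¬ IsStd N q (key N a b c) := by
  have := Nat.mul_le_mul_left N h
  rw [isStd_key_iff]
  omega

section Independence

variable (k) in
def nf (N q : ℕ) (x : ℕ × ℤ) : ℕ × ℤ →₀ k := if IsStd N q x then Finsupp.single x 1 else 0

variable (k) in
def normalForm (N q : ℕ) : MvPolynomial (Fin 3) k →ₗ[k] (ℕ × ℤ →₀ k) :=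
  (basisMonomials (Fin 3) k).constr k fun d => nf k N q (key N (d 0) (d 1) (d 2))

lemma monomial_one_eq_mono (d : Fin 3 →₀ ℕ) : monomial d (1 : k) = mono (d 0) (d 1) (d 2) := by
  rw [monomial_eq, C_1, one_mul, Finsupp.prod_fintype _ _ (by simp), Fin.prod_univ_three, mono]

lemma normalForm_monomial (d : Fin 3 →₀ ℕ) :
    normalForm k N q (monomial d 1) = nf k N q (key N (d 0) (d 1) (d 2)) := by
  have := (basisMonomials (Fin 3) k).constr_basis k (fun d => nf k N q (key N (d 0) (d 1) (d 2))) d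
  rwa [coe_basisMonomials] at this

lemma normalForm_mono (a b c : ℕ) : normalForm k N q (mono a b c) = nf k N q (key N a b c) := by
  have h := monomial_one_eq_mono (k := k)
    (Finsupp.single 0 a + Finsupp.single 1 b + Finsupp.single 2 c)
  simp only [Finsupp.coe_add, Pi.add_apply, Finsupp.single_apply, Fin.reduceEq, if_true,
    if_false, add_zero, zero_add] at h
  rw [← h, normalForm_monomial]
  simp

lemma normalForm_mul_eq_zero {g : MvPolynomial (Fin 3) k}
    (hg : g ∈ ({X 0 ^ N - X 1 * X 2, X 0 ^ q, X 1 ^ q, X 2 ^ q} : Set _))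
    (f : MvPolynomial (Fin 3) k) :
    normalForm k N q (f * g) = 0 := by
  suffices normalForm k N q ∘ₗ LinearMap.mulRight k g = 0 from LinearMap.congr_fun this f
  refine (basisMonomials (Fin 3) k).ext fun d => ?_
  simp only [coe_basisMonomials, LinearMap.comp_apply, LinearMap.mulRight_apply,
    monomial_one_eq_mono, LinearMap.zero_apply]
  generalize d 0 = a, d 1 = b, d 2 = c
  rcases hg with rfl | rfl | rfl | rfl
  · rw [show mono a b c * (X 0 ^ N - X 1 * X 2)
        = (mono (a + N) b c - mono a (b + 1) (c + 1) : MvPolynomial (Fin 3) k) by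
      simp only [mono]; ring, map_sub, normalForm_mono, normalForm_mono, key_add_left, sub_self]
  · rw [show mono a b c * X 0 ^ q = (mono (a + q) b c : MvPolynomial (Fin 3) k) by
      simp only [mono]; ring, normalForm_mono, nf, if_neg]
    rw [isStd_key_iff]; omega
  · rw [show mono a b c * X 1 ^ q = (mono a (b + q) c : MvPolynomial (Fin 3) k) by
      simp only [mono]; ring, normalForm_mono, nf, if_neg (not_isStd_key_of_le_max (by omega))]
  · rw [show mono a b c * X 2 ^ q = (mono a b (c + q) : MvPolynomial (Fin 3) k) by
      simp only [mono]; ring, normalForm_mono, nf, if_neg (not_isStd_key_of_le_max (by omega))]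

lemma normalForm_eq_zero_of_mem {f : MvPolynomial (Fin 3) k} (hf : f ∈ anIdeal k N q) :
    normalForm k N q f = 0 := by
  suffices ∀ g, normalForm k N q (g * f) = 0 by simpa using this 1
  induction hf using Submodule.span_induction with
  | mem g hg => exact fun f => normalForm_mul_eq_zero hg f
  | zero => simp
  | add a b _ _ ha hb => intro g; rw [mul_add, map_add, ha, hb, add_zero]
  | smul r a _ ha => intro g; rw [smul_eq_mul, ← mul_assoc]; exact ha _

def stdSet (N q : ℕ) : Finset (ℕ × ℤ) := (range q ×ˢ Icc (-(q : ℤ)) q).filter (IsStd N q)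

lemma mem_stdSet {x : ℕ × ℤ} : x ∈ stdSet N q ↔ IsStd N q x := by
  refine ⟨fun h => (mem_filter.1 h).2, fun h => mem_filter.2 ⟨?_, h⟩⟩
  have : x.2.natAbs < q := Nat.lt_of_mul_lt_mul_left ((Nat.le_add_left _ x.1).trans_lt h.2)
  simp only [mem_product, mem_range, mem_Icc]
  exact ⟨h.1, by omega, by omega⟩

lemma normalForm_monoOf {x : ℕ × ℤ} (hx : IsStd N q x) :
    normalForm k N q (monoOf x) = Finsupp.single x 1 := by
  rw [monoOf, normalForm_mono, key_toNat_neg_toNat, nf, if_pos hx]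

lemma linearIndependent_mk_monoOf :
    LinearIndependent k fun x : stdSet N q => Ideal.Quotient.mk (anIdeal k N q) (monoOf x) := by
  have h : LinearIndependent k (normalForm k N q ∘ fun x : stdSet N q => monoOf x) := by
    convert Finsupp.basisSingleOne.linearIndependent.comp _ Subtype.val_injective
    ext1 x
    simp [normalForm_monoOf (mem_stdSet.1 x.2)]
  exact (h.of_comp _).map (f := (Ideal.Quotient.mkₐ k (anIdeal k N q)).toLinearMap)
    ((Submodule.range_ker_disjoint h).mono_right fun f hf =>
      normalForm_eq_zero_of_mem (Ideal.Quotient.eq_zero_iff_mem.1 hf))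

end Independence

section Spanning

local notation "mk" => Ideal.Quotient.mk (anIdeal k N q)

lemma mk_mono_add_mul (t a b c : ℕ) : mk (mono (a + N * t) b c) = mk (mono a (b + t) (c + t)) := by
  induction t generalizing a with
  | zero => simp
  | succ t ih =>
    rw [mul_add_one, ← add_assoc, add_right_comm, ih, Ideal.Quotient.eq]
    have : mono (a + N) (b + t) (c + t) - mono a (b + (t + 1)) (c + (t + 1))
        = mono a (b + t) (c + t) * (X 0 ^ N - X 1 * X 2 : MvPolynomial (Fin 3) k) := by
      simp only [mono]; ring
    exact this ▸ Ideal.mul_mem_left _ _ (Ideal.subset_span (by simp))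

lemma mk_mono_eq_zero {a b c : ℕ} (h : q ≤ a ∨ q ≤ b ∨ q ≤ c) : mk (mono a b c) = 0 := by
  rw [Ideal.Quotient.eq_zero_iff_mem]
  rcases h with h | h | h
  · refine Ideal.mem_of_dvd _ ?_ (Ideal.subset_span (by simp) : X 0 ^ q ∈ anIdeal k N q)
    exact dvd_mul_of_dvd_left (dvd_mul_of_dvd_left (pow_dvd_pow _ h) _) _
  · refine Ideal.mem_of_dvd _ ?_ (Ideal.subset_span (by simp) : X 1 ^ q ∈ anIdeal k N q)
    exact dvd_mul_of_dvd_left (dvd_mul_of_dvd_right (pow_dvd_pow _ h) _) _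
  · refine Ideal.mem_of_dvd _ ?_ (Ideal.subset_span (by simp) : X 2 ^ q ∈ anIdeal k N q)
    exact dvd_mul_of_dvd_right (pow_dvd_pow _ h) _

lemma mk_monoOf_eq_zero {x : ℕ × ℤ} (hx : ¬ IsStd N q x) : mk (monoOf x) = 0 := by
  obtain ⟨a, d⟩ := x
  simp only [IsStd, not_and_or, not_lt] at hx
  rcases hx with ha | hd
  · exact mk_mono_eq_zero (Or.inl ha)
  · have hle : N * (q - d.natAbs) ≤ a := by rw [Nat.mul_sub]; omega
    rw [monoOf, ← Nat.sub_add_cancel hle, mk_mono_add_mul]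
    exact mk_mono_eq_zero (by omega)

lemma mk_mono_eq_mk_monoOf_key (a b c : ℕ) : mk (mono a b c) = mk (monoOf (key N a b c)) := by
  rw [monoOf, key, mk_mono_add_mul]
  congr 2 <;> omega

lemma span_mk_monoOf_eq_top :
    Submodule.span k (Set.range fun x : stdSet N q => mk (monoOf x)) = ⊤ := by
  rw [eq_top_iff]
  rintro y -
  obtain ⟨f, rfl⟩ := Ideal.Quotient.mk_surjective y
  induction f using MvPolynomial.induction_on' with
  | monomial d r =>
    rw [← mul_one r, ← smul_eq_mul, ← smul_monomial, ← Ideal.Quotient.mkₐ_eq_mk k, map_smul,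
      Ideal.Quotient.mkₐ_eq_mk, monomial_one_eq_mono, mk_mono_eq_mk_monoOf_key]
    refine Submodule.smul_mem _ _ ?_
    by_cases h : IsStd N q (key N (d 0) (d 1) (d 2))
    · exact Submodule.subset_span ⟨⟨_, mem_stdSet.2 h⟩, rfl⟩
    · rw [mk_monoOf_eq_zero h]
      exact Submodule.zero_mem _
  | add f g hf hg => rw [map_add]; exact Submodule.add_mem _ hf hg

end Spanning

lemma finrank_quotient_anIdeal [Nontrivial k] :
    Module.finrank k (MvPolynomial (Fin 3) k ⧸ anIdeal k N q) = #(stdSet N q) := by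
  rw [Module.finrank_eq_card_basis
    (Module.Basis.mk linearIndependent_mk_monoOf span_mk_monoOf_eq_top.ge), Fintype.card_coe]

lemma add_mul_lt_mul_iff_add_div_lt {a m : ℕ} (hN : 0 < N) :
    a + N * m < N * q ↔ m + a / N < q := by
  have hdiv := Nat.div_add_mod a N
  have hmod := Nat.mod_lt a hN
  constructor
  · intro h
    by_contra! h'
    have := Nat.mul_le_mul_left N h'
    rw [mul_add] at this
    omega
  · intro h
    have := Nat.mul_le_mul_left N (Nat.succ_le_of_lt h)
    rw [Nat.mul_succ, mul_add] at this
    omega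

lemma card_stdSet_eq_sum (hN : 0 < N) :
    #(stdSet N q) = ∑ a ∈ range q, #(Ioo (-((q - a / N : ℕ) : ℤ)) (q - a / N : ℕ)) := by
  rw [stdSet, card_filter, sum_product]
  refine sum_congr rfl fun a ha => ?_
  rw [← card_filter]
  congr 1
  ext d
  have := Nat.div_le_self a N
  simp only [mem_range] at ha
  simp only [IsStd, add_mul_lt_mul_iff_add_div_lt hN, mem_filter, mem_Icc, mem_Ioo]
  generalize a / N = s at *
  omega

lemma card_stdSet_add (hN : 0 < N) :
    #(stdSet N q) + q + 2 * ∑ a ∈ range q, a / N = 2 * q * q := by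
  calc #(stdSet N q) + q + 2 * ∑ a ∈ range q, a / N
      = ∑ a ∈ range q, (#(Ioo (-((q - a / N : ℕ) : ℤ)) (q - a / N : ℕ)) + 1 + 2 * (a / N)) := by
        rw [card_stdSet_eq_sum hN, sum_add_distrib, sum_add_distrib, sum_const, card_range,
          smul_eq_mul, mul_one, mul_sum]
    _ = ∑ a ∈ range q, 2 * q := sum_congr rfl fun a ha => by
        have := Nat.div_le_self a N
        simp only [mem_range] at ha
        rw [Int.card_Ioo]
        generalize a / N = s at *
        omega
    _ = 2 * q * q := by rw [sum_const, card_range, smul_eq_mul, mul_comm]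

lemma sum_range_mul_div (N m : ℕ) : 2 * ∑ a ∈ range (N * m), a / N + N * m = N * m * m := by
  rcases N.eq_zero_or_pos with rfl | hN
  · simp
  induction m with
  | zero => simp
  | succ m ih =>
    have h : ∀ x ∈ range N, (N * m + x) / N = m := fun x hx => by
      rw [Nat.mul_add_div hN, Nat.div_eq_of_lt (mem_range.1 hx), add_zero]
    rw [mul_add_one, sum_range_add, sum_congr rfl h, sum_const, card_range, smul_eq_mul]
    linarith

lemma two_mul_sum_range_div (N q : ℕ) :
    2 * ∑ a ∈ range q, a / N + N * (q / N) = q / N * (q + q % N) := by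
  rcases N.eq_zero_or_pos with rfl | hN
  · simp
  have hq := Nat.div_add_mod q N
  set m := q / N
  set r := q % N
  have h0 := sum_range_mul_div N m
  have h : ∀ x ∈ range r, (N * m + x) / N = m := fun x hx => by
    rw [Nat.mul_add_div hN, Nat.div_eq_of_lt ((mem_range.1 hx).trans (Nat.mod_lt q hN)), add_zero]
  rw [← hq, sum_range_add, sum_congr rfl h, sum_const, card_range, smul_eq_mul]
  nlinarith

lemma card_stdSet (hN : 0 < N) :
    (#(stdSet N q) : ℚ)
      = (2 - 1 / (N : ℚ)) * (q : ℚ) ^ 2 - (q % N : ℕ) + ((q % N : ℕ) : ℚ) ^ 2 / N := by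
  have h1 : ((#(stdSet N q) + q + 2 * ∑ a ∈ range q, a / N : ℕ) : ℚ) = 2 * q * q := by
    exact_mod_cast card_stdSet_add hN
  have h2 : ((2 * ∑ a ∈ range q, a / N + N * (q / N) : ℕ) : ℚ) = ((q / N) * (q + q % N) : ℕ) := by
    rw [two_mul_sum_range_div]
  have h3 : ((N * (q / N) + q % N : ℕ) : ℚ) = q := by rw [Nat.div_add_mod]
  push_cast at h1 h2 h3
  have hN' : (N : ℚ) ≠ 0 := by positivity
  field_simp
  linear_combination (N : ℚ) * h1 - (N : ℚ) * h2 + ((N : ℚ) - q - (q % N : ℕ)) * h3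

end

end AnSingularity

theorem stmt_1_general (k : Type*) [Field k] (p : ℕ)
    (n : ℕ) (e : ℕ) :
    (Module.finrank k (MvPolynomial (Fin 3) k ⧸
        (Ideal.span {(X 0 : MvPolynomial (Fin 3) k) ^ (n + 1) - X 1 * X 2,
          X 0 ^ p ^ e, X 1 ^ p ^ e, X 2 ^ p ^ e} : Ideal (MvPolynomial (Fin 3) k))) : ℚ)
      = (2 - 1 / ((n : ℚ) + 1)) * ((p : ℚ) ^ e) ^ 2
        - ((p ^ e % (n + 1) : ℕ) : ℚ)
        + ((p ^ e % (n + 1) : ℕ) : ℚ) ^ 2 / ((n : ℚ) + 1) := by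
  have h := AnSingularity.card_stdSet (N := n + 1) (q := p ^ e) n.succ_pos
  push_cast at h
  rw [← h]
  exact_mod_cast AnSingularity.finrank_quotient_anIdeal

/-- **Kunz.** The Hilbert-Kunz function of the A_n ring
`k[X,Y,Z]/(X^{n+1} - YZ)` in characteristic `p > 0`:
with `q = p^e` and `r = q % (n+1)`, the colength of `(X^q, Y^q, Z^q)` is
`(2 - 1/(n+1)) q² - r + r²/(n+1)`. -/
theorem stmt_1 (k : Type*) [Field k] (p : ℕ) (hp : p.Prime) [CharP k p]
    (n : ℕ) (e : ℕ) :
    (Module.finrank k (MvPolynomial (Fin 3) k ⧸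
        (Ideal.span {(X 0 : MvPolynomial (Fin 3) k) ^ (n + 1) - X 1 * X 2,
          X 0 ^ p ^ e, X 1 ^ p ^ e, X 2 ^ p ^ e} : Ideal (MvPolynomial (Fin 3) k))) : ℚ)
      = (2 - 1 / ((n : ℚ) + 1)) * ((p : ℚ) ^ e) ^ 2
        - ((p ^ e % (n + 1) : ℕ) : ℚ)
        + ((p ^ e % (n + 1) : ℕ) : ℚ) ^ 2 / ((n : ℚ) + 1) :=
  stmt_1_general k p n e
end

section
/- Let k be a field of characteristic 2 and R = k[X,Y,Z]/(X² + Y³ + Z⁵). Then for every e ≥ 1, dim_k R/(X^{2^e}, Y^{2^e}, Z^{2^e}) = 2 · 4^e. -/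
/-!
In characteristic 2, Frobenius gives
`(X² + Y³ + Z⁵)^(2^(e-1)) = X^(2^e) + Y^(3·2^(e-1)) + Z^(5·2^(e-1))`, so for `e ≥ 1` the
generator `X^(2^e)` is redundant: with `q = 2^e` the ring is
`k[X,Y,Z]/(X² + Y³ + Z⁵, Y^q, Z^q)`. Since `X² + Y³ + Z⁵` is monic of degree 2 in `X`, this
is free of rank 2 over `k[Y,Z]/(Y^q, Z^q)`, which has dimension `q²`.
-/

namespace AdjoinRoot

theorem finrank_eq_finrank_mul_natDegree {k B : Type*} [Field k] [CommRing B] [Algebra k B]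
    {g : Polynomial B} (hg : g.Monic) :
    Module.finrank k (AdjoinRoot g) = Module.finrank k B * g.natDegree := by
  rcases subsingleton_or_nontrivial B with hB | hB
  · have : Subsingleton (AdjoinRoot g) := mk_surjective.subsingleton
    simp [Module.finrank_zero_of_subsingleton]
  let pb := powerBasis' hg
  have := Module.Free.of_basis pb.basis
  have := pb.finite
  rw [← Module.finrank_mul_finrank k B, pb.finrank, powerBasis'_dim]

end AdjoinRoot

namespace Polynomial

noncomputable def quotientSpanSupMapCAlgEquiv {A : Type*} [CommRing A] (f : A[X]) (I : Ideal A) :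
    (A[X] ⧸ (Ideal.span {f} ⊔ I.map (C : A →+* A[X]))) ≃ₐ[A]
      AdjoinRoot (f.map (Ideal.Quotient.mk I)) :=
  have hI : (I.map (C : A →+* A[X])).map (AdjoinRoot.mkₐ f) = I.map (AdjoinRoot.of f) := by
    rw [← Ideal.map_coe (AdjoinRoot.mkₐ f), Ideal.map_map]; rfl
  let e : (A[X] ⧸ (Ideal.span {f} ⊔ I.map (C : A →+* A[X]))) ≃ₐ[A]
      AdjoinRoot f ⧸ (I.map (C : A →+* A[X])).map (AdjoinRoot.mkₐ f) :=
    (DoubleQuot.quotQuotEquivQuotSupₐ A _ _).symm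
  (e.trans (Ideal.quotientEquivAlgOfEq A hI)).trans (AdjoinRoot.quotEquivQuotMap f I)

theorem finrank_quotient_span_sup_map_C {k A : Type*} [Field k] [CommRing A] [Algebra k A]
    {f : A[X]} (hf : f.Monic) (I : Ideal A) :
    Module.finrank k (A[X] ⧸ (Ideal.span {f} ⊔ I.map (C : A →+* A[X]))) =
      Module.finrank k (A ⧸ I) * f.natDegree := by
  rw [((quotientSpanSupMapCAlgEquiv f I).restrictScalars k).toLinearEquiv.finrank_eq,
    AdjoinRoot.finrank_eq_finrank_mul_natDegree (hf.map _)]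
  rcases subsingleton_or_nontrivial (A ⧸ I) with hB | hB
  · simp [Module.finrank_zero_of_subsingleton]
  · rw [hf.natDegree_map]

end Polynomial

namespace MvPolynomial

theorem finSuccEquiv_rename_succ {R : Type*} [CommSemiring R] {n : ℕ}
    (p : MvPolynomial (Fin n) R) :
    finSuccEquiv R n (rename Fin.succ p) = Polynomial.C p := by
  suffices ((finSuccEquiv R n).toAlgHom.comp (rename Fin.succ)) = Polynomial.CAlgHom from
    DFunLike.congr_fun this p
  ext i
  simp [finSuccEquiv_X_succ]

theorem finrank_quotient_span_insert_image_rename_succ {k : Type*} [Field k] {n : ℕ}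
    {p : MvPolynomial (Fin (n + 1)) k} (hp : (finSuccEquiv k n p).Monic)
    (S : Set (MvPolynomial (Fin n) k)) :
    Module.finrank k
        (MvPolynomial (Fin (n + 1)) k ⧸ Ideal.span (insert p (rename Fin.succ '' S))) =
      Module.finrank k (MvPolynomial (Fin n) k ⧸ Ideal.span S) *
        (finSuccEquiv k n p).natDegree := by
  have hmap : (Ideal.span (insert p (rename Fin.succ '' S))).map (finSuccEquiv k n) =
      Ideal.span {finSuccEquiv k n p} ⊔
        (Ideal.span S).map (Polynomial.C : MvPolynomial (Fin n) k →+* _) := by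
    rw [Ideal.map_span, Ideal.map_span, Set.image_insert_eq, Set.image_image, Ideal.span_insert]
    simp only [finSuccEquiv_rename_succ]
  rw [(Ideal.quotientEquivAlg _ _ (finSuccEquiv k n) hmap.symm).toLinearEquiv.finrank_eq,
    Polynomial.finrank_quotient_span_sup_map_C hp]

theorem finrank_quotient_span_range_X_pow {k : Type*} [Field k] (n m : ℕ) :
    Module.finrank k (MvPolynomial (Fin n) k ⧸
      Ideal.span (Set.range fun i => (X i ^ m : MvPolynomial (Fin n) k))) = m ^ n := by
  induction n with
  | zero =>
    rw [Set.range_eq_empty, Ideal.span_empty, pow_zero,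
      ((AlgEquiv.quotientBot k _).trans (isEmptyAlgEquiv k (Fin 0))).toLinearEquiv.finrank_eq,
      Module.finrank_self]
  | succ n ih =>
    have hrange : (Set.range fun i : Fin (n + 1) => (X i ^ m : MvPolynomial (Fin (n + 1)) k)) =
        insert (X 0 ^ m) (rename Fin.succ '' Set.range fun i => X i ^ m) := by
      rw [Fin.range_fin_succ, ← Set.range_comp]
      simp only [Function.comp_def, map_pow, rename_X]
      rfl
    have hX0 : finSuccEquiv k n (X 0 ^ m) = Polynomial.X ^ m := by
      rw [map_pow, finSuccEquiv_X_zero]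
    rw [hrange, finrank_quotient_span_insert_image_rename_succ (hX0 ▸ Polynomial.monic_X_pow m),
      ih, hX0, Polynomial.natDegree_X_pow, pow_succ]

end MvPolynomial

theorem pow_two_pow_mem_span_sq_add_pow_three_add_pow_five {R : Type*} [CommRing R] [CharP R 2]
    (x y z : R) {e : ℕ} (he : 1 ≤ e) :
    x ^ 2 ^ e ∈ Ideal.span {x ^ 2 + y ^ 3 + z ^ 5, y ^ 2 ^ e, z ^ 2 ^ e} := by
  obtain ⟨d, rfl⟩ : ∃ d, e = d + 1 := ⟨e - 1, by omega⟩
  have frobenius : (x ^ 2 + y ^ 3 + z ^ 5) ^ 2 ^ d =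
      x ^ 2 ^ (d + 1) + y ^ 2 ^ (d + 1) * y ^ 2 ^ d + z ^ 2 ^ (d + 1) * z ^ (3 * 2 ^ d) := by
    rw [add_pow_char_pow, add_pow_char_pow]
    ring
  rw [eq_sub_of_add_eq (eq_sub_of_add_eq frobenius.symm)]
  refine Ideal.sub_mem _ (Ideal.sub_mem _ (Ideal.pow_mem_of_mem _ ?_ _ (by positivity))
    (Ideal.mul_mem_right _ _ ?_)) (Ideal.mul_mem_right _ _ ?_) <;>
  exact Ideal.subset_span (by simp)

open MvPolynomial

/-- The Hilbert-Kunz function of the E₈ ring `k[X,Y,Z]/(X²+Y³+Z⁵)`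
in characteristic 2 is `e ↦ 2·p^{2e}` for `e ≥ 1`. -/
theorem stmt_2 (k : Type*) [Field k] [CharP k 2] (e : ℕ) (he : 1 ≤ e) :
    Module.finrank k (MvPolynomial (Fin 3) k ⧸
        (Ideal.span {(X 0 : MvPolynomial (Fin 3) k) ^ 2 + X 1 ^ 3 + X 2 ^ 5,
          X 0 ^ 2 ^ e, X 1 ^ 2 ^ e, X 2 ^ 2 ^ e} : Ideal (MvPolynomial (Fin 3) k)))
      = 2 * 4 ^ e := by
  have hX0 := pow_two_pow_mem_span_sq_add_pow_three_add_pow_five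
    (X 0 : MvPolynomial (Fin 3) k) (X 1) (X 2) he
  have hgens : ({X 1 ^ 2 ^ e, X 2 ^ 2 ^ e} : Set (MvPolynomial (Fin 3) k)) =
      rename Fin.succ '' Set.range fun i : Fin 2 => X i ^ 2 ^ e := by
    rw [← Set.range_comp, Fin.range_fin_succ, Set.range_unique]
    simp [Fin.tail]
  have hmonic : finSuccEquiv k 2 (X 0 ^ 2 + X 1 ^ 3 + X 2 ^ 5) =
      Polynomial.X ^ 2 + Polynomial.C (X 0 ^ 3 + X 1 ^ 5) := by
    rw [show (1 : Fin 3) = Fin.succ 0 from rfl, show (2 : Fin 3) = Fin.succ 1 from rfl]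
    simp only [map_add, map_pow, finSuccEquiv_X_zero, finSuccEquiv_X_succ, add_assoc]
  rw [Set.insert_comm, Ideal.span, Submodule.span_insert_eq_span hX0, ← Ideal.span, hgens,
    finrank_quotient_span_insert_image_rename_succ
      (hmonic ▸ Polynomial.monic_X_pow_add_C _ two_ne_zero),
    finrank_quotient_span_range_X_pow, hmonic, Polynomial.natDegree_X_pow_add_C,
    mul_comm, ← pow_mul, pow_mul']
  norm_num
end

section
/- Let k be a field of characteristic 3 and R = k[X,Y,Z]/(X² + Y³ + Z⁵). Then for every e ≥ 1, dim_k R/(X^{3^e}, Y^{3^e}, Z^{3^e}) = 2 · 9^e. -/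
open MvPolynomial

/-!
In characteristic 3 the Frobenius power of the relation `f = X² + Y³ + Z⁵` is
`f ^ 3^d = X^(2m) + Y^(3m) + Z^(5m)` with `m = 3^d`, so `X^(3m)` already lies in
`(f, Y^(3m), Z^(3m))` and the generator `X^(3^e)` may be dropped.
The remaining quotient `k[X,Y,Z]/(X² + Y³ + Z⁵, Y^q, Z^q)` is the tower
`k[z]/(z^q) ⊂ k[z,y]/(z^q, y^q) ⊂ (k[z,y]/(z^q, y^q))[x]/(x² + y³ + z⁵)`
of free extensions of ranks `q`, `q` and `2`, hence has dimension `2q²`.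
-/

theorem pow_three_pow_succ_mem_span {R : Type*} [CommRing R] [ExpChar R 3] (x y z : R)
    (d : ℕ) :
    x ^ 3 ^ (d + 1) ∈ Ideal.span {x ^ 2 + y ^ 3 + z ^ 5, y ^ 3 ^ (d + 1), z ^ 3 ^ (d + 1)} := by
  set m := 3 ^ d
  have frobenius : (x ^ 2 + y ^ 3 + z ^ 5) ^ m = (x ^ m) ^ 2 + (y ^ m) ^ 3 + (z ^ m) ^ 5 := by
    simp only [m, add_pow_expChar_pow, ← pow_mul, mul_comm]
  have key : x ^ 3 ^ (d + 1) = x ^ m * (x ^ 2 + y ^ 3 + z ^ 5) ^ m - x ^ m * y ^ 3 ^ (d + 1)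
      - x ^ m * z ^ (2 * m) * z ^ 3 ^ (d + 1) := by
    rw [frobenius, pow_succ]; ring
  rw [key]
  refine sub_mem (sub_mem ?_ ?_) ?_ <;> refine Ideal.mul_mem_left _ _ ?_
  · exact Ideal.pow_mem_of_mem _ (Ideal.subset_span (by simp)) _ (by positivity)
  · exact Ideal.subset_span (by simp)
  · exact Ideal.subset_span (by simp)

namespace AdjoinRoot

variable {R : Type*} [CommRing R]

theorem root_X_pow_pow (d : ℕ) : root (Polynomial.X ^ d : Polynomial R) ^ d = 0 := by
  simpa using eval₂_root (Polynomial.X ^ d : Polynomial R)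

theorem root_pow_add_of (d : ℕ) (r : R) :
    root (Polynomial.X ^ d + Polynomial.C r) ^ d + of _ r = 0 := by
  have h := eval₂_root (Polynomial.X ^ d + Polynomial.C r)
  rwa [Polynomial.eval₂_add, Polynomial.eval₂_X_pow, Polynomial.eval₂_C] at h

theorem finrank_X_pow [Nontrivial R] (d : ℕ) :
    Module.finrank R (AdjoinRoot (Polynomial.X ^ d : Polynomial R)) = d := by
  simp [(powerBasis' (Polynomial.monic_X_pow d)).finrank]

theorem nontrivial_X_pow [Nontrivial R] {d : ℕ} (hd : 0 < d) :
    Nontrivial (AdjoinRoot (Polynomial.X ^ d : Polynomial R)) :=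
  Module.nontrivial_of_finrank_pos (R := R) (by rwa [finrank_X_pow])

end AdjoinRoot

namespace BrieskornPham

variable (k : Type*) [Field k] (a b c m n : ℕ)

abbrev TruncZ : Type _ := AdjoinRoot (Polynomial.X ^ n : Polynomial k)

abbrev TruncYZ : Type _ := AdjoinRoot (Polynomial.X ^ m : Polynomial (TruncZ k n))

noncomputable def relation : Polynomial (TruncYZ k m n) :=
  Polynomial.X ^ a +
    Polynomial.C (AdjoinRoot.root _ ^ b + AdjoinRoot.of _ (AdjoinRoot.root _) ^ c)

abbrev Tower : Type _ := AdjoinRoot (relation k a b c m n)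

noncomputable abbrev ideal : Ideal (MvPolynomial (Fin 3) k) :=
  Ideal.span {X 0 ^ a + X 1 ^ b + X 2 ^ c, X 1 ^ m, X 2 ^ n}

noncomputable def towerGens : Fin 3 → Tower k a b c m n :=
  ![AdjoinRoot.root _, AdjoinRoot.of _ (AdjoinRoot.root _),
    AdjoinRoot.of _ (AdjoinRoot.of _ (AdjoinRoot.root _))]

theorem towerGens_relation :
    towerGens k a b c m n 0 ^ a + towerGens k a b c m n 1 ^ b + towerGens k a b c m n 2 ^ c = 0 := by
  have h : AdjoinRoot.root (relation k a b c m n) ^ a + AdjoinRoot.of _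
      (AdjoinRoot.root _ ^ b + AdjoinRoot.of _ (AdjoinRoot.root _) ^ c) = 0 :=
    AdjoinRoot.root_pow_add_of a _
  rwa [map_add, map_pow, map_pow, ← add_assoc] at h

theorem towerGens_one_pow : towerGens k a b c m n 1 ^ m = 0 := by
  show AdjoinRoot.of _ (AdjoinRoot.root _) ^ m = 0
  rw [← map_pow, AdjoinRoot.root_X_pow_pow, map_zero]

theorem towerGens_two_pow : towerGens k a b c m n 2 ^ n = 0 := by
  show AdjoinRoot.of _ (AdjoinRoot.of _ (AdjoinRoot.root _)) ^ n = 0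
  rw [← map_pow, ← map_pow, AdjoinRoot.root_X_pow_pow, map_zero, map_zero]

theorem ideal_le_ker_aeval_towerGens :
    ideal k a b c m n ≤ RingHom.ker (aeval (towerGens k a b c m n)) := by
  rw [Ideal.span_le]
  rintro p (rfl | rfl | rfl) <;>
    simp only [SetLike.mem_coe, RingHom.mem_ker, map_add, map_pow, aeval_X, towerGens_relation,
      towerGens_one_pow, towerGens_two_pow]

noncomputable def toTower : (MvPolynomial (Fin 3) k ⧸ ideal k a b c m n) →ₐ[k] Tower k a b c m n :=
  Ideal.Quotient.liftₐ _ (aeval (towerGens k a b c m n)) (ideal_le_ker_aeval_towerGens k a b c m n)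

theorem toTower_mk (p : MvPolynomial (Fin 3) k) :
    toTower k a b c m n (Ideal.Quotient.mk _ p) = aeval (towerGens k a b c m n) p := rfl

theorem mk_X_relation :
    (Ideal.Quotient.mk (ideal k a b c m n) (X 0)) ^ a + Ideal.Quotient.mk _ (X 1) ^ b
      + Ideal.Quotient.mk _ (X 2) ^ c = 0 := by
  simp only [← map_pow, ← map_add, Ideal.Quotient.eq_zero_iff_mem]
  exact Ideal.subset_span (by simp)

theorem mk_X_one_pow : Ideal.Quotient.mk (ideal k a b c m n) (X 1) ^ m = 0 := by
  rw [← map_pow, Ideal.Quotient.eq_zero_iff_mem]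
  exact Ideal.subset_span (by simp)

theorem mk_X_two_pow : Ideal.Quotient.mk (ideal k a b c m n) (X 2) ^ n = 0 := by
  rw [← map_pow, Ideal.Quotient.eq_zero_iff_mem]
  exact Ideal.subset_span (by simp)

noncomputable def ofTower : Tower k a b c m n →ₐ[k] MvPolynomial (Fin 3) k ⧸ ideal k a b c m n :=
  AdjoinRoot.liftAlgHom _
    (AdjoinRoot.liftAlgHom _
      (AdjoinRoot.liftAlgHom _ (Algebra.ofId k _) (Ideal.Quotient.mk _ (X 2))
        (by simpa using mk_X_two_pow k a b c m n))
      (Ideal.Quotient.mk _ (X 1)) (by simpa using mk_X_one_pow k a b c m n))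
    (Ideal.Quotient.mk _ (X 0)) (by
      simp only [relation, Polynomial.eval₂_add, Polynomial.eval₂_X_pow, Polynomial.eval₂_C]
      simpa [add_assoc] using mk_X_relation k a b c m n)

noncomputable def quotientEquivTower :
    (MvPolynomial (Fin 3) k ⧸ ideal k a b c m n) ≃ₐ[k] Tower k a b c m n :=
  AlgEquiv.ofAlgHom (toTower k a b c m n) (ofTower k a b c m n)
    (by ext <;> simp [toTower_mk, ofTower, towerGens])
    (by
      apply Ideal.Quotient.algHom_ext
      ext i
      fin_cases i <;> simp [toTower_mk, ofTower, towerGens])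

variable {k a m n}

theorem relation_monic (ha : 0 < a) : (relation k a b c m n).Monic :=
  Polynomial.monic_X_pow_add (Polynomial.degree_C_le.trans_lt (by exact_mod_cast ha))

theorem finrank_tower (ha : 0 < a) (hm : 0 < m) (hn : 0 < n) :
    Module.finrank k (Tower k a b c m n) = a * m * n := by
  have := AdjoinRoot.nontrivial_X_pow (R := k) hn
  have := AdjoinRoot.nontrivial_X_pow (R := TruncZ k n) hm
  have := (Polynomial.monic_X_pow (R := k) n).free_adjoinRoot
  have := (Polynomial.monic_X_pow (R := TruncZ k n) m).free_adjoinRoot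
  have := (relation_monic (k := k) (m := m) (n := n) b c ha).free_adjoinRoot
  have : Module.Free k (TruncYZ k m n) := Module.Free.trans (S := TruncZ k n)
  rw [← Module.finrank_mul_finrank k (TruncYZ k m n), ← Module.finrank_mul_finrank k (TruncZ k n),
    AdjoinRoot.finrank_X_pow, AdjoinRoot.finrank_X_pow,
    (AdjoinRoot.powerBasis' (relation_monic b c ha)).finrank, AdjoinRoot.powerBasis'_dim, relation,
    Polynomial.natDegree_X_pow_add_C]
  ring

theorem finrank_quotient (ha : 0 < a) (hm : 0 < m) (hn : 0 < n) :
    Module.finrank k (MvPolynomial (Fin 3) k ⧸ ideal k a b c m n) = a * m * n :=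
  (quotientEquivTower k a b c m n).toLinearEquiv.finrank_eq.trans (finrank_tower b c ha hm hn)

end BrieskornPham

/-- The Hilbert-Kunz function of the E₈ ring `k[X,Y,Z]/(X²+Y³+Z⁵)`
in characteristic 3 is `e ↦ 2·p^{2e}` for `e ≥ 1`. -/
theorem stmt_3 (k : Type*) [Field k] [CharP k 3] (e : ℕ) (he : 1 ≤ e) :
    Module.finrank k (MvPolynomial (Fin 3) k ⧸
        (Ideal.span {(X 0 : MvPolynomial (Fin 3) k) ^ 2 + X 1 ^ 3 + X 2 ^ 5,
          X 0 ^ 3 ^ e, X 1 ^ 3 ^ e, X 2 ^ 3 ^ e} : Ideal (MvPolynomial (Fin 3) k)))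
      = 2 * 9 ^ e := by
  obtain ⟨d, rfl⟩ : ∃ d, e = d + 1 := ⟨e - 1, by omega⟩
  rw [Set.insert_comm, Ideal.span_insert, sup_eq_right.mpr
    ((Ideal.span_singleton_le_iff_mem _).mpr (pow_three_pow_succ_mem_span _ _ _ d)),
    BrieskornPham.finrank_quotient 3 5 two_pos (by positivity) (by positivity),
    show 9 = 3 ^ 2 from rfl, ← pow_mul]
  ring
end

section
/- Let k be a field of characteristic 5 and R = k[X,Y,Z]/(X² + Y³ + Z⁵). Then for every e ≥ 1, dim_k R/(X^{5^e}, Y^{5^e}, Z^{5^e}) = 2 · 25^e. -/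
/-!
Write `f = x² + y³ + z⁵` and `q = 5^(e-1)`. In characteristic 5 the Frobenius gives
`f^q = (x^q)² + (y^q)³ + (z^q)⁵`, so modulo `f` the ideal `(x^{5q}, y^{5q}, z^{5q})` equals
`(x^{2q} + y^{3q}, y^{5q})`; `x^{5q}` becomes redundant because
`u⁵ = (u³ - u v³)(u² + v³) + u v · v⁵`. The resulting quotient is an iterated extension by
monic polynomials: `k[y]/(y^{5q})`, then `x` with `x^{2q} = -y^{3q}`, then `z` with
`z⁵ = -(x² + y³)`. These are free of ranks `5q`, `2q` and `5`, so the dimension is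
`50 q² = 2 · 25^e`.
-/

open MvPolynomial
open scoped Polynomial

theorem span_fifth_powers_eq_of_pow_eq {R : Type*} [CommRing R] {f u v w : R} {N : ℕ}
    (hN : N ≠ 0) (hf : f ^ N = u ^ 2 + v ^ 3 + w ^ 5) :
    Ideal.span {f, u ^ 5, v ^ 5, w ^ 5} = Ideal.span {f, u ^ 2 + v ^ 3, v ^ 5} := by
  have hu : u ^ 5 = (u ^ 3 - u * v ^ 3) * (u ^ 2 + v ^ 3) + u * v * v ^ 5 := by ring
  have hw : w ^ 5 = f ^ N - (u ^ 2 + v ^ 3) := by rw [hf]; ring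
  have hg : u ^ 2 + v ^ 3 = f ^ N - w ^ 5 := by rw [hf]; ring
  apply le_antisymm <;>
    simp only [Ideal.span_le, Set.insert_subset_iff, Set.singleton_subset_iff, SetLike.mem_coe]
  · set J := Ideal.span {f, u ^ 2 + v ^ 3, v ^ 5}
    have hfJ : f ∈ J := Ideal.subset_span (by simp)
    have hgJ : u ^ 2 + v ^ 3 ∈ J := Ideal.subset_span (by simp)
    have hvJ : v ^ 5 ∈ J := Ideal.subset_span (by simp)
    rw [hu, hw]
    exact ⟨hfJ, J.add_mem (J.mul_mem_left _ hgJ) (J.mul_mem_left _ hvJ), hvJ,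
      J.sub_mem (J.pow_mem_of_mem hfJ _ (Nat.pos_of_ne_zero hN)) hgJ⟩
  · set I := Ideal.span {f, u ^ 5, v ^ 5, w ^ 5}
    have hfI : f ∈ I := Ideal.subset_span (by simp)
    have hvI : v ^ 5 ∈ I := Ideal.subset_span (by simp)
    have hwI : w ^ 5 ∈ I := Ideal.subset_span (by simp)
    rw [hg]
    exact ⟨hfI, I.sub_mem (I.pow_mem_of_mem hfI _ (Nat.pos_of_ne_zero hN)) hwI, hvI⟩

theorem span_e8_frobenius {R : Type*} [CommRing R] [CharP R 5] (a b c : R) (n : ℕ) :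
    Ideal.span {a ^ 2 + b ^ 3 + c ^ 5, a ^ 5 ^ (n + 1), b ^ 5 ^ (n + 1), c ^ 5 ^ (n + 1)} =
      Ideal.span {a ^ 2 + b ^ 3 + c ^ 5, a ^ (2 * 5 ^ n) + b ^ (3 * 5 ^ n), b ^ (5 * 5 ^ n)} := by
  have : Fact (Nat.Prime 5) := ⟨by norm_num⟩
  have hfrob : (a ^ 2 + b ^ 3 + c ^ 5) ^ 5 ^ n =
      (a ^ 5 ^ n) ^ 2 + (b ^ 5 ^ n) ^ 3 + (c ^ 5 ^ n) ^ 5 := by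
    simp only [add_pow_char_pow, ← pow_mul, mul_comm]
  have key := span_fifth_powers_eq_of_pow_eq (pow_ne_zero n (by norm_num)) hfrob
  simp only [← pow_mul] at key
  simpa only [pow_succ, mul_comm] using key

theorem finrank_adjoinRoot_X_pow_add_C {R : Type*} [CommRing R] [Nontrivial R] {n : ℕ}
    (hn : n ≠ 0) (a : R) :
    Module.finrank R (AdjoinRoot (Polynomial.X ^ n + Polynomial.C a)) = n :=
  (finrank_quotient_span_eq_natDegree' (Polynomial.monic_X_pow_add_C a hn)).trans
    Polynomial.natDegree_X_pow_add_C

theorem AdjoinRoot.root_X_pow_pow_s4 {R : Type*} [CommRing R] (n : ℕ) :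
    root (Polynomial.X ^ n : R[X]) ^ n = 0 := by
  simpa only [map_pow, AdjoinRoot.mk_X] using AdjoinRoot.mk_self (f := (Polynomial.X ^ n : R[X]))

theorem AdjoinRoot.root_X_pow_add_C_pow {R : Type*} [CommRing R] (n : ℕ) (a : R) :
    root (Polynomial.X ^ n + Polynomial.C a) ^ n + of _ a = 0 := by
  have h := AdjoinRoot.eval₂_root (Polynomial.X ^ n + Polynomial.C a)
  rwa [Polynomial.eval₂_add, Polynomial.eval₂_X_pow, Polynomial.eval₂_C] at h

namespace E8Tower

noncomputable section

open AdjoinRoot (root of liftAlgHom)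

variable (k : Type*) [CommRing k] (m : ℕ)

-- `TowerXYZ k m = k[y]/(y^{5m}) [x]/(x^{2m} + y^{3m}) [z]/(z⁵ + x² + y³)`
def relY : k[X] := Polynomial.X ^ (5 * m)

abbrev TowerY := AdjoinRoot (relY k m)

def relX : (TowerY k m)[X] :=
  Polynomial.X ^ (2 * m) + Polynomial.C (root (relY k m) ^ (3 * m))

abbrev TowerXY := AdjoinRoot (relX k m)

def relZ : (TowerXY k m)[X] :=
  Polynomial.X ^ 5 + Polynomial.C (root (relX k m) ^ 2 + of (relX k m) (root (relY k m)) ^ 3)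

abbrev TowerXYZ := AdjoinRoot (relZ k m)

def gen : Fin 3 → TowerXYZ k m :=
  ![of _ (root (relX k m)), of _ (of _ (root (relY k m))), root (relZ k m)]

@[simp] theorem gen_zero : gen k m 0 = of _ (root (relX k m)) := rfl
@[simp] theorem gen_one : gen k m 1 = of _ (of _ (root (relY k m))) := rfl
@[simp] theorem gen_two : gen k m 2 = root (relZ k m) := rfl

def truncGenerators : Set (MvPolynomial (Fin 3) k) :=
  {X 0 ^ 2 + X 1 ^ 3 + X 2 ^ 5, X 0 ^ (2 * m) + X 1 ^ (3 * m), X 1 ^ (5 * m)}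

def truncIdeal : Ideal (MvPolynomial (Fin 3) k) := Ideal.span (truncGenerators k m)

abbrev TruncQuot := MvPolynomial (Fin 3) k ⧸ truncIdeal k m

theorem gen_one_pow_eq_zero : gen k m 1 ^ (5 * m) = 0 := by
  have h : root (relY k m) ^ (5 * m) = 0 := AdjoinRoot.root_X_pow_pow_s4 _
  simp [← map_pow, h]

theorem gen_zero_pow_add_gen_one_pow_eq_zero :
    gen k m 0 ^ (2 * m) + gen k m 1 ^ (3 * m) = 0 := by
  have h : root (relX k m) ^ (2 * m) + of _ (root (relY k m) ^ (3 * m)) = 0 :=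
    AdjoinRoot.root_X_pow_add_C_pow _ _
  simp [← map_pow, ← map_add, h]

theorem gen_e8_eq_zero : gen k m 0 ^ 2 + gen k m 1 ^ 3 + gen k m 2 ^ 5 = 0 := by
  have h : root (relZ k m) ^ 5 +
      of _ (root (relX k m) ^ 2 + of (relX k m) (root (relY k m)) ^ 3) = 0 :=
    AdjoinRoot.root_X_pow_add_C_pow _ _
  simp only [gen_zero, gen_one, gen_two, map_add, map_pow] at h ⊢
  linear_combination h

theorem truncIdeal_le_ker_aeval_gen : truncIdeal k m ≤ RingHom.ker (aeval (gen k m)) := by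
  simp only [truncIdeal, truncGenerators, Ideal.span_le, Set.insert_subset_iff,
    Set.singleton_subset_iff, SetLike.mem_coe, RingHom.mem_ker, map_add, map_pow, aeval_X]
  exact ⟨gen_e8_eq_zero k m, gen_zero_pow_add_gen_one_pow_eq_zero k m, gen_one_pow_eq_zero k m⟩

def toTower : TruncQuot k m →ₐ[k] TowerXYZ k m :=
  Ideal.Quotient.liftₐ _ (aeval (gen k m)) fun _ hp ↦ truncIdeal_le_ker_aeval_gen k m hp

@[simp]
theorem toTower_mk (p : MvPolynomial (Fin 3) k) :
    toTower k m (Ideal.Quotient.mk _ p) = aeval (gen k m) p := rfl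

theorem mk_eq_zero_of_mem_truncGenerators {p : MvPolynomial (Fin 3) k}
    (hp : p ∈ truncGenerators k m) : Ideal.Quotient.mk (truncIdeal k m) p = 0 :=
  Ideal.Quotient.eq_zero_iff_mem.mpr (Ideal.subset_span hp)

def ofTowerY : TowerY k m →ₐ[k] TruncQuot k m :=
  liftAlgHom _ (Algebra.ofId _ _) (Ideal.Quotient.mk _ (X 1)) (by
    simp only [relY, Polynomial.eval₂_X_pow, ← map_pow]
    exact mk_eq_zero_of_mem_truncGenerators k m (by simp [truncGenerators]))

@[simp]
theorem ofTowerY_root : ofTowerY k m (root _) = Ideal.Quotient.mk _ (X 1) :=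
  AdjoinRoot.liftAlgHom_root ..

def ofTowerXY : TowerXY k m →ₐ[k] TruncQuot k m :=
  liftAlgHom _ (ofTowerY k m) (Ideal.Quotient.mk _ (X 0)) (by
    simp only [relX, Polynomial.eval₂_add, Polynomial.eval₂_X_pow, Polynomial.eval₂_C]
    simp only [AlgHom.coe_toRingHom, map_pow, ofTowerY_root]
    rw [← map_pow, ← map_pow, ← map_add]
    exact mk_eq_zero_of_mem_truncGenerators k m (by simp [truncGenerators]))

@[simp]
theorem ofTowerXY_root : ofTowerXY k m (root _) = Ideal.Quotient.mk _ (X 0) :=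
  AdjoinRoot.liftAlgHom_root ..

@[simp]
theorem ofTowerXY_of (t : TowerY k m) : ofTowerXY k m (of _ t) = ofTowerY k m t :=
  AdjoinRoot.liftAlgHom_of ..

def ofTower : TowerXYZ k m →ₐ[k] TruncQuot k m :=
  liftAlgHom _ (ofTowerXY k m) (Ideal.Quotient.mk _ (X 2)) (by
    simp only [relZ, Polynomial.eval₂_add, Polynomial.eval₂_X_pow, Polynomial.eval₂_C]
    simp only [AlgHom.coe_toRingHom, map_add, map_pow, ofTowerXY_root, ofTowerXY_of,
      ofTowerY_root]
    rw [← map_pow, ← map_pow, ← map_pow, ← map_add, ← map_add]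
    exact mk_eq_zero_of_mem_truncGenerators k m (.inl (by ring)))

@[simp]
theorem ofTower_root : ofTower k m (root _) = Ideal.Quotient.mk _ (X 2) :=
  AdjoinRoot.liftAlgHom_root ..

@[simp]
theorem ofTower_of (t : TowerXY k m) : ofTower k m (of _ t) = ofTowerXY k m t :=
  AdjoinRoot.liftAlgHom_of ..

def quotEquivTower : TruncQuot k m ≃ₐ[k] TowerXYZ k m :=
  AlgEquiv.ofAlgHom (toTower k m) (ofTower k m) (by ext <;> simp) (by
    apply Ideal.Quotient.algHom_ext
    ext i
    fin_cases i <;> simp)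

theorem finrank_towerXYZ [Nontrivial k] (hm : m ≠ 0) :
    Module.finrank k (TowerXYZ k m) = 50 * m ^ 2 := by
  have hY : Module.finrank k (TowerY k m) = 5 * m :=
    (finrank_quotient_span_eq_natDegree' (Polynomial.monic_X_pow _)).trans
      (Polynomial.natDegree_X_pow _)
  have : Nontrivial (TowerY k m) := Module.nontrivial_of_finrank_pos (R := k) (by lia)
  have hXY : Module.finrank (TowerY k m) (TowerXY k m) = 2 * m :=
    finrank_adjoinRoot_X_pow_add_C (by lia) _
  have : Nontrivial (TowerXY k m) := Module.nontrivial_of_finrank_pos (R := TowerY k m) (by lia)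
  have hXYZ : Module.finrank (TowerXY k m) (TowerXYZ k m) = 5 :=
    finrank_adjoinRoot_X_pow_add_C (by norm_num) _
  have : Module.Free k (TowerY k m) := (Polynomial.monic_X_pow _).free_adjoinRoot
  have : Module.Free (TowerY k m) (TowerXY k m) :=
    (Polynomial.monic_X_pow_add_C _ (by lia)).free_adjoinRoot
  have : Module.Free k (TowerXY k m) := .trans (S := TowerY k m)
  have : Module.Free (TowerXY k m) (TowerXYZ k m) :=
    (Polynomial.monic_X_pow_add_C _ (by norm_num)).free_adjoinRoot
  rw [← Module.finrank_mul_finrank k (TowerXY k m), ← Module.finrank_mul_finrank k (TowerY k m),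
    hY, hXY, hXYZ]
  ring

theorem finrank_truncQuot [Nontrivial k] (hm : m ≠ 0) :
    Module.finrank k (TruncQuot k m) = 50 * m ^ 2 :=
  (quotEquivTower k m).toLinearEquiv.finrank_eq.trans (finrank_towerXYZ k m hm)

end

end E8Tower

/-- The Hilbert-Kunz function of the E₈ ring `k[X,Y,Z]/(X²+Y³+Z⁵)`
in characteristic 5 is `e ↦ 2·p^{2e}` for `e ≥ 1`. -/
theorem stmt_4 (k : Type*) [Field k] [CharP k 5] (e : ℕ) (he : 1 ≤ e) :
    Module.finrank k (MvPolynomial (Fin 3) k ⧸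
        (Ideal.span {(X 0 : MvPolynomial (Fin 3) k) ^ 2 + X 1 ^ 3 + X 2 ^ 5,
          X 0 ^ 5 ^ e, X 1 ^ 5 ^ e, X 2 ^ 5 ^ e} : Ideal (MvPolynomial (Fin 3) k)))
      = 2 * 25 ^ e := by
  obtain ⟨n, rfl⟩ : ∃ n, e = n + 1 := ⟨e - 1, by omega⟩
  rw [span_e8_frobenius]
  calc _ = 50 * (5 ^ n) ^ 2 := E8Tower.finrank_truncQuot k _ (by positivity)
    _ = 2 * 25 ^ (n + 1) := by rw [← pow_mul, mul_comm n, pow_mul]; ring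
end

section
/- Let k be a field of characteristic 2, n ≥ 2, and R = k[X,Y,Z]/(X² + Y^{n+1} + YZ²). Then for every e ≥ 1, dim_k R/(X^{2^e}, Y^{2^e}, Z^{2^e}) = 2 · 4^e. -/
/-!
In characteristic 2,
`(X² + Y^{n+1} + YZ²)^{2^{e-1}} = X^{2^e} + Y^{(n+1)2^{e-1}} + Y^{2^{e-1}}Z^{2^e}`,
so for `n ≥ 1` the generator `X^{2^e}` is redundant. What remains,
`k[X,Y,Z]/(X² + h(Y,Z), Y^q, Z^q)`, is obtained from the truncated ring `k[y,z]/(y^q, z^q)`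
by adjoining a root of the monic polynomial `T² + h(y,z)`, hence is free of rank `q · q · 2`
over `k`.
-/

open MvPolynomial
open scoped Polynomial

section AdjoinRootMonic

variable {R S : Type*} [CommRing R] [CommRing S] [Algebra R S] {g : S[X]}

theorem Polynomial.Monic.finrank_adjoinRoot [Nontrivial S] (hg : g.Monic) :
    Module.finrank S (AdjoinRoot g) = g.natDegree :=
  finrank_quotient_span_eq_natDegree' hg

theorem Polynomial.Monic.nontrivial_adjoinRoot [Nontrivial S] (hg : g.Monic)
    (hd : g.natDegree ≠ 0) : Nontrivial (AdjoinRoot g) :=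
  Module.nontrivial_of_finrank_pos (R := S) <| hg.finrank_adjoinRoot ▸ Nat.pos_of_ne_zero hd

theorem Polynomial.Monic.finrank_adjoinRoot_eq_mul [Nontrivial R] [Nontrivial S]
    [Module.Free R S] (hg : g.Monic) :
    Module.finrank R (AdjoinRoot g) = Module.finrank R S * g.natDegree := by
  have := hg.free_adjoinRoot
  rw [← Module.finrank_mul_finrank R S (AdjoinRoot g), hg.finrank_adjoinRoot]

end AdjoinRootMonic

abbrev TruncatedPolynomial (R : Type*) [CommRing R] (q : ℕ) : Type _ :=
  AdjoinRoot (Polynomial.X ^ q : R[X])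

namespace TruncatedPolynomial

variable (R : Type*) [CommRing R] (q : ℕ)

instance : Module.Free R (TruncatedPolynomial R q) :=
  (Polynomial.monic_X_pow q).free_adjoinRoot

theorem finrank_eq [Nontrivial R] : Module.finrank R (TruncatedPolynomial R q) = q := by
  rw [(Polynomial.monic_X_pow q).finrank_adjoinRoot, Polynomial.natDegree_X_pow]

theorem nontrivial [Nontrivial R] (hq : q ≠ 0) : Nontrivial (TruncatedPolynomial R q) :=
  (Polynomial.monic_X_pow q).nontrivial_adjoinRoot (by rwa [Polynomial.natDegree_X_pow])

variable {R q}

theorem root_pow : AdjoinRoot.root (Polynomial.X ^ q : R[X]) ^ q = 0 := by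
  simpa using AdjoinRoot.eval₂_root (Polynomial.X ^ q : R[X])

end TruncatedPolynomial

abbrev TruncatedPolynomial₂ (R : Type*) [CommRing R] (q : ℕ) : Type _ :=
  TruncatedPolynomial (TruncatedPolynomial R q) q

namespace TruncatedPolynomial₂

variable (R : Type*) [CommRing R] (q : ℕ)

noncomputable def y : TruncatedPolynomial₂ R q := AdjoinRoot.of _ (AdjoinRoot.root _)

noncomputable def z : TruncatedPolynomial₂ R q := AdjoinRoot.root _

instance : Module.Free R (TruncatedPolynomial₂ R q) :=
  Module.Free.trans (S := TruncatedPolynomial R q)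

theorem finrank_eq [Nontrivial R] (hq : q ≠ 0) :
    Module.finrank R (TruncatedPolynomial₂ R q) = q * q := by
  have := TruncatedPolynomial.nontrivial R q hq
  rw [(Polynomial.monic_X_pow q).finrank_adjoinRoot_eq_mul, TruncatedPolynomial.finrank_eq,
    Polynomial.natDegree_X_pow]

theorem nontrivial [Nontrivial R] (hq : q ≠ 0) : Nontrivial (TruncatedPolynomial₂ R q) :=
  have := TruncatedPolynomial.nontrivial R q hq
  TruncatedPolynomial.nontrivial _ q hq

variable {R q}

theorem y_pow : y R q ^ q = 0 := by
  rw [y, ← map_pow, TruncatedPolynomial.root_pow, map_zero]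

theorem z_pow : z R q ^ q = 0 := TruncatedPolynomial.root_pow

end TruncatedPolynomial₂

namespace CyclicCover

open TruncatedPolynomial₂

variable {R : Type*} [CommRing R] (d q : ℕ) (h : MvPolynomial (Fin 2) R)

noncomputable abbrev ideal : Ideal (MvPolynomial (Fin 3) R) :=
  Ideal.span {X 0 ^ d + rename Fin.succ h, X 1 ^ q, X 2 ^ q}

noncomputable abbrev poly : (TruncatedPolynomial₂ R q)[X] :=
  Polynomial.X ^ d + Polynomial.C (aeval ![y R q, z R q] h)

noncomputable def toAdjoinRoot : MvPolynomial (Fin 3) R →ₐ[R] AdjoinRoot (poly d q h) :=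
  aeval ![AdjoinRoot.root _, AdjoinRoot.of _ (y R q), AdjoinRoot.of _ (z R q)]

theorem ideal_le_ker : ideal d q h ≤ RingHom.ker (toAdjoinRoot d q h) := by
  simp only [Ideal.span_le, Set.insert_subset_iff, Set.singleton_subset_iff, SetLike.mem_coe,
    RingHom.mem_ker]
  refine ⟨?_, ?_, ?_⟩
  · have hroot := AdjoinRoot.eval₂_root (poly d q h)
    rw [Polynomial.eval₂_add, Polynomial.eval₂_X_pow, Polynomial.eval₂_C] at hroot
    have hsucc : ![AdjoinRoot.root (poly d q h), AdjoinRoot.of _ (y R q),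
        AdjoinRoot.of _ (z R q)] ∘ Fin.succ = AdjoinRoot.of _ ∘ ![y R q, z R q] := by
      funext i; fin_cases i <;> rfl
    rw [toAdjoinRoot, map_add, map_pow, aeval_X, aeval_rename, hsucc, ← AdjoinRoot.algebraMap_eq,
      aeval_algebraMap_apply]
    exact hroot
  · rw [toAdjoinRoot, map_pow, aeval_X]
    simp [← map_pow, y_pow]
  · rw [toAdjoinRoot, map_pow, aeval_X]
    simp [← map_pow, z_pow]

local notation "𝒬" => MvPolynomial (Fin 3) R ⧸ ideal d q h

noncomputable def fromTruncatedPolynomial : TruncatedPolynomial R q →ₐ[R] 𝒬 :=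
  AdjoinRoot.liftAlgHom _ (Algebra.ofId R _) (Ideal.Quotient.mk _ (X 1)) <| by
    rw [Polynomial.eval₂_X_pow, ← map_pow, Ideal.Quotient.eq_zero_iff_mem]
    exact Ideal.subset_span (by simp)

noncomputable def fromTruncatedPolynomial₂ : TruncatedPolynomial₂ R q →ₐ[R] 𝒬 :=
  AdjoinRoot.liftAlgHom _ (fromTruncatedPolynomial d q h) (Ideal.Quotient.mk _ (X 2)) <| by
    rw [Polynomial.eval₂_X_pow, ← map_pow, Ideal.Quotient.eq_zero_iff_mem]
    exact Ideal.subset_span (by simp)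

theorem fromTruncatedPolynomial₂_comp_aeval :
    (fromTruncatedPolynomial₂ d q h).comp (aeval ![y R q, z R q]) =
      (Ideal.Quotient.mkₐ R _).comp (rename Fin.succ) := by
  ext i
  fin_cases i <;> simp [fromTruncatedPolynomial₂, fromTruncatedPolynomial, y, z]

noncomputable def ofAdjoinRoot : AdjoinRoot (poly d q h) →ₐ[R] 𝒬 :=
  AdjoinRoot.liftAlgHom _ (fromTruncatedPolynomial₂ d q h) (Ideal.Quotient.mk _ (X 0)) <| by
    have hc := congr($(fromTruncatedPolynomial₂_comp_aeval d q h) h)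
    simp only [AlgHom.comp_apply, Ideal.Quotient.mkₐ_eq_mk] at hc
    rw [Polynomial.eval₂_add, Polynomial.eval₂_X_pow, Polynomial.eval₂_C, AlgHom.coe_toRingHom,
      hc, ← map_pow, ← map_add, Ideal.Quotient.eq_zero_iff_mem]
    exact Ideal.subset_span (by simp)

noncomputable def toAdjoinRootQuotient : 𝒬 →ₐ[R] AdjoinRoot (poly d q h) :=
  Ideal.Quotient.liftₐ _ (toAdjoinRoot d q h) fun _ ha => ideal_le_ker d q h ha

@[simp]
theorem toAdjoinRootQuotient_mk (p : MvPolynomial (Fin 3) R) :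
    toAdjoinRootQuotient d q h (Ideal.Quotient.mk _ p) = toAdjoinRoot d q h p :=
  rfl

noncomputable def quotientEquiv : 𝒬 ≃ₐ[R] AdjoinRoot (poly d q h) :=
  AlgEquiv.ofAlgHom (toAdjoinRootQuotient d q h) (ofAdjoinRoot d q h)
    (by ext <;>
      simp [ofAdjoinRoot, fromTruncatedPolynomial₂, fromTruncatedPolynomial, toAdjoinRoot, y, z])
    (Ideal.Quotient.algHom_ext R <| MvPolynomial.algHom_ext fun i => by
      fin_cases i <;>
      simp [ofAdjoinRoot, fromTruncatedPolynomial₂, fromTruncatedPolynomial, toAdjoinRoot, y, z])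

theorem finrank_quotient [Nontrivial R] (hd : d ≠ 0) (hq : q ≠ 0) :
    Module.finrank R 𝒬 = q * q * d := by
  have := TruncatedPolynomial₂.nontrivial R q hq
  rw [(quotientEquiv d q h).toLinearEquiv.finrank_eq,
    (Polynomial.monic_X_pow_add_C _ hd).finrank_adjoinRoot_eq_mul,
    TruncatedPolynomial₂.finrank_eq R q hq, Polynomial.natDegree_X_pow_add_C]

end CyclicCover

theorem Ideal.pow_expChar_pow_succ_mem {A : Type*} [CommRing A] {p : ℕ} [ExpChar A p]
    {I : Ideal A} {a b : A} (e : ℕ) (hab : a ^ p + b ∈ I) (hb : b ^ p ^ e ∈ I) :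
    a ^ p ^ (e + 1) ∈ I := by
  have hfrob : (a ^ p + b) ^ p ^ e = a ^ p ^ (e + 1) + b ^ p ^ e := by
    rw [add_pow_expChar_pow, ← pow_mul, ← pow_succ']
  rw [← add_sub_cancel_right (a ^ p ^ (e + 1)) (b ^ p ^ e), ← hfrob]
  exact sub_mem (I.pow_mem_of_mem hab _ (pow_pos (expChar_pos A p) e)) hb

theorem span_insert_X_zero_pow_eq {k : Type*} [CommRing k] [CharP k 2] {n : ℕ} (hn : 1 ≤ n)
    {e : ℕ} (he : 1 ≤ e) :
    Ideal.span {(X 0 : MvPolynomial (Fin 3) k) ^ 2 + X 1 ^ (n + 1) + X 1 * X 2 ^ 2,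
        X 0 ^ 2 ^ e, X 1 ^ 2 ^ e, X 2 ^ 2 ^ e} =
      Ideal.span {X 0 ^ 2 + X 1 ^ (n + 1) + X 1 * X 2 ^ 2, X 1 ^ 2 ^ e, X 2 ^ 2 ^ e} := by
  obtain ⟨e, rfl⟩ : ∃ e', e = e' + 1 := ⟨e - 1, by omega⟩
  obtain ⟨m, rfl⟩ : ∃ m, n = m + 1 := ⟨n - 1, by omega⟩
  rw [Set.insert_comm]
  refine Submodule.span_insert_eq_span ?_
  refine Ideal.pow_expChar_pow_succ_mem (b := X 1 ^ (m + 1 + 1) + X 1 * X 2 ^ 2) e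
    (Ideal.subset_span (by simp [add_assoc])) ?_
  have hfrob : (X 1 ^ (m + 1 + 1) + X 1 * X 2 ^ 2 : MvPolynomial (Fin 3) k) ^ 2 ^ e =
      X 1 ^ 2 ^ (e + 1) * (X 1 ^ m) ^ 2 ^ e + X 1 ^ 2 ^ e * X 2 ^ 2 ^ (e + 1) := by
    rw [add_pow_char_pow]; ring
  rw [hfrob]
  exact add_mem (Ideal.mul_mem_right _ _ (Ideal.subset_span (by simp)))
    (Ideal.mul_mem_left _ _ (Ideal.subset_span (by simp)))

/-- The Hilbert-Kunz function of the D_{n+2} ring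
`k[X,Y,Z]/(X² + Y^{n+1} + YZ²)` in characteristic 2 is `e ↦ 2·4^e` for `e ≥ 1`. -/
theorem stmt_9 (k : Type*) [Field k] [CharP k 2] (n : ℕ) (hn : 2 ≤ n)
    (e : ℕ) (he : 1 ≤ e) :
    Module.finrank k (MvPolynomial (Fin 3) k ⧸
        (Ideal.span {(X 0 : MvPolynomial (Fin 3) k) ^ 2 + X 1 ^ (n + 1) +
            X 1 * X 2 ^ 2,
          X 0 ^ 2 ^ e, X 1 ^ 2 ^ e, X 2 ^ 2 ^ e} : Ideal (MvPolynomial (Fin 3) k)))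
      = 2 * 4 ^ e := by
  have hcover : (X 0 : MvPolynomial (Fin 3) k) ^ 2 + X 1 ^ (n + 1) + X 1 * X 2 ^ 2 =
      X 0 ^ 2 + rename Fin.succ (X 0 ^ (n + 1) + X 0 * X 1 ^ 2) := by
    simp [add_assoc]
  rw [span_insert_X_zero_pow_eq (by omega) he, hcover,
    CyclicCover.finrank_quotient 2 (2 ^ e) _ two_ne_zero (pow_ne_zero e two_ne_zero),
    show (4 : ℕ) = 2 ^ 2 by norm_num, ← pow_mul]
  ring
end

section
/- Let R be a standard-graded affine domain over a field k, and f, f₁, …, fₙ homogeneous elements with f, fₙ an R-regular sequence. Then Syz_R(f·f₁, …, f·f_{n-1}, fₙ) ≅ Syz_R(f₁, …, fₙ)(-deg f) as graded R-modules. -/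
/-!
Multiplying the last coordinate by `f`, `(a₁,…,aₙ₋₁,b) ↦ (a₁,…,aₙ₋₁,f b)`, sends syzygies of
`(g₁,…,gₙ₋₁,gₗ)` to syzygies of `(f g₁,…,f gₙ₋₁,gₗ)`, since it multiplies the relation by `f`.
It is injective because `f` is a nonzerodivisor, and surjective because a relation
`Σ aᵢ f gᵢ + b gₗ = 0` gives `f ∣ b gₗ`, hence `f ∣ b` as `gₗ` is regular modulo `f`.
As `f` is homogeneous, the map matches the shifts `deg (f gᵢ) = deg f + deg gᵢ` on the first
coordinates and the twist by `deg f` on the last one.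
-/

/-- The linear map `(a₁,…,aₙ) ↦ Σ aᵢ·gᵢ`; the syzygy module
`Syz_R(g₁,…,gₙ)` is its kernel. -/
noncomputable def syzMap {R : Type*} [CommRing R] {n : ℕ} (g : Fin n → R) :
    (Fin n → R) →ₗ[R] R :=
  ∑ i, (LinearMap.proj i : (Fin n → R) →ₗ[R] R).smulRight (g i)

open DirectSum

theorem mul_mem_graded_iff_of_isSMulRegular {ι A σ : Type*} [DecidableEq ι]
    [AddLeftCancelMonoid ι] [Semiring A] [SetLike σ A] [AddSubmonoidClass σ A]
    (𝒜 : ι → σ) [GradedRing 𝒜] {a x : A} {i j : ι} (ha : a ∈ 𝒜 i)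
    (hreg : IsSMulRegular A a) : a * x ∈ 𝒜 (i + j) ↔ x ∈ 𝒜 j := by
  refine ⟨fun h => ?_, SetLike.mul_mem_graded ha⟩
  have key : a * (decompose 𝒜 x j : A) = a * x := by
    rw [← coe_decompose_mul_add_of_left_mem 𝒜 ha, decompose_of_mem_same 𝒜 h]
  rw [← hreg key]
  exact (decompose 𝒜 x j).2

theorem dvd_of_dvd_mul_of_isSMulRegular_quotient {R : Type*} [CommRing R] {f g a : R}
    (hg : IsSMulRegular (R ⧸ Ideal.span {f}) (Ideal.Quotient.mk (Ideal.span {f}) g))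
    (h : f ∣ a * g) : f ∣ a := by
  rw [← Ideal.Quotient.eq_zero_iff_dvd]
  refine hg ?_
  dsimp only
  rwa [smul_zero, smul_eq_mul, ← map_mul, mul_comm, Ideal.Quotient.eq_zero_iff_dvd]

section Syzygy

variable {R : Type*} [CommRing R] {n : ℕ}

theorem syzMap_apply (g v : Fin n → R) : syzMap g v = ∑ i, v i * g i := by
  simp [syzMap]

theorem syzMap_mul_apply (g c v : Fin n → R) :
    syzMap g (c * v) = syzMap (c * g) v := by
  simp only [syzMap_apply, Pi.mul_apply, mul_comm, mul_left_comm]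

theorem syzMap_smul_apply (r : R) (g v : Fin n → R) :
    syzMap (r • g) v = r * syzMap g v := by
  simp only [syzMap_apply, Pi.smul_apply, smul_eq_mul, Finset.mul_sum, mul_left_comm]

def lastWeight (f : R) : Fin (n + 1) → R :=
  Fin.snoc 1 f

@[simp]
theorem lastWeight_castSucc (f : R) (i : Fin n) : lastWeight f i.castSucc = 1 :=
  Fin.snoc_castSucc ..

@[simp]
theorem lastWeight_last (f : R) : lastWeight (n := n) f (Fin.last n) = f :=
  Fin.snoc_last ..

theorem isSMulRegular_lastWeight {f : R} (hf : IsSMulRegular R f) (i : Fin (n + 1)) :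
    IsSMulRegular R (lastWeight f i) := by
  induction i using Fin.lastCases with
  | last => simpa using hf
  | cast i => simp [IsSMulRegular.one]

theorem lastWeight_mem {ι σ : Type*} [Zero ι] [SetLike σ R] (𝒜 : ι → σ) [SetLike.GradedOne 𝒜]
    {f : R} {df : ι} (hf : f ∈ 𝒜 df) (i : Fin (n + 1)) :
    lastWeight f i ∈ 𝒜 ((Fin.snoc 0 df : Fin (n + 1) → ι) i) := by
  induction i using Fin.lastCases with
  | last => simpa using hf
  | cast i => simpa using SetLike.GradedOne.one_mem

theorem lastWeight_mul_snoc (f : R) (g : Fin n → R) (gl : R) :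
    lastWeight f * Fin.snoc (fun i => f * g i) gl = f • Fin.snoc g gl := by
  ext i
  induction i using Fin.lastCases with
  | last => simp
  | cast i => simp

theorem syzMap_snoc_mul_lastWeight_mul (f : R) (g : Fin n → R) (gl : R)
    (w : Fin (n + 1) → R) :
    syzMap (Fin.snoc (fun i => f * g i) gl) (lastWeight f * w) =
      f * syzMap (Fin.snoc g gl) w := by
  rw [syzMap_mul_apply, lastWeight_mul_snoc, syzMap_smul_apply]

variable {f : R} {g : Fin n → R} {gl : R}

theorem dvd_last_of_syzMap_snoc_mul_eq_zero
    (hgl : IsSMulRegular (R ⧸ Ideal.span {f}) (Ideal.Quotient.mk (Ideal.span {f}) gl))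
    {v : Fin (n + 1) → R} (hv : syzMap (Fin.snoc (fun i => f * g i) gl) v = 0) :
    f ∣ v (Fin.last n) := by
  rw [syzMap_apply, Fin.sum_univ_castSucc] at hv
  simp only [Fin.snoc_castSucc, Fin.snoc_last] at hv
  refine dvd_of_dvd_mul_of_isSMulRegular_quotient hgl ?_
  rw [eq_neg_of_add_eq_zero_right hv, dvd_neg]
  exact Finset.dvd_sum fun i _ => Dvd.intro _ (mul_left_comm _ _ _)

theorem exists_lastWeight_mul_eq (hf : IsSMulRegular R f)
    (hgl : IsSMulRegular (R ⧸ Ideal.span {f}) (Ideal.Quotient.mk (Ideal.span {f}) gl))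
    {v : Fin (n + 1) → R} (hv : syzMap (Fin.snoc (fun i => f * g i) gl) v = 0) :
    ∃ w, syzMap (Fin.snoc g gl) w = 0 ∧ lastWeight f * w = v := by
  obtain ⟨b, hb⟩ := dvd_last_of_syzMap_snoc_mul_eq_zero hgl hv
  have hw : lastWeight f * Fin.snoc (Fin.init v) b = v := by
    ext i
    induction i using Fin.lastCases with
    | last => simp [hb]
    | cast i => simp [Fin.init]
  refine ⟨_, hf ?_, hw⟩
  change f * _ = f * 0
  rw [← syzMap_snoc_mul_lastWeight_mul, hw, hv, mul_zero]

variable (f g gl)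

noncomputable def syzMulLastWeight :
    LinearMap.ker (syzMap (Fin.snoc g gl)) →ₗ[R]
      LinearMap.ker (syzMap (Fin.snoc (fun i => f * g i) gl)) :=
  (LinearMap.mulLeft R (lastWeight f)).restrict fun w hw => by
    simp_all [syzMap_snoc_mul_lastWeight_mul]

variable {f g gl}

theorem syzMulLastWeight_bijective (hf : IsSMulRegular R f)
    (hgl : IsSMulRegular (R ⧸ Ideal.span {f}) (Ideal.Quotient.mk (Ideal.span {f}) gl)) :
    Function.Bijective (syzMulLastWeight f g gl) := by
  refine ⟨fun w w' h => ?_, fun v => ?_⟩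
  · ext i
    exact isSMulRegular_lastWeight hf i (congrFun (congrArg Subtype.val h) i)
  · obtain ⟨w, hw, hwv⟩ := exists_lastWeight_mul_eq hf hgl v.2
    exact ⟨⟨w, hw⟩, Subtype.ext hwv⟩

noncomputable def syzEquiv (hf : IsSMulRegular R f)
    (hgl : IsSMulRegular (R ⧸ Ideal.span {f}) (Ideal.Quotient.mk (Ideal.span {f}) gl)) :
    LinearMap.ker (syzMap (Fin.snoc (fun i => f * g i) gl)) ≃ₗ[R]
      LinearMap.ker (syzMap (Fin.snoc g gl)) :=
  (LinearEquiv.ofBijective _ (syzMulLastWeight_bijective hf hgl)).symm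

theorem coe_syzEquiv_symm_apply (hf : IsSMulRegular R f)
    (hgl : IsSMulRegular (R ⧸ Ideal.span {f}) (Ideal.Quotient.mk (Ideal.span {f}) gl))
    (w : LinearMap.ker (syzMap (Fin.snoc g gl))) :
    ((syzEquiv hf hgl).symm w : Fin (n + 1) → R) = lastWeight f * (w : Fin (n + 1) → R) :=
  rfl

end Syzygy

theorem stmt_11_general {k R : Type*} [Field k] [CommRing R] [Algebra k R]
    (𝒜 : ℤ → Submodule k R) [GradedAlgebra 𝒜]
    {n : ℕ} (f : R) (df : ℤ) (hf : f ∈ 𝒜 df)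
    (g : Fin n → R) (d : Fin n → ℤ)
    (gl : R) (dl : ℤ)
    (hreg₁ : IsSMulRegular R f)
    (hreg₂ : IsSMulRegular (R ⧸ Ideal.span {f})
      (Ideal.Quotient.mk (Ideal.span {f}) gl)) :
    ∃ e : LinearMap.ker (syzMap (Fin.snoc (fun i => f * g i) gl)) ≃ₗ[R]
        LinearMap.ker (syzMap (Fin.snoc g gl)),
      (∀ (m : ℤ) (v : LinearMap.ker (syzMap (Fin.snoc (fun i => f * g i) gl))),
        (∀ i, (v : Fin (n + 1) → R) i ∈
            𝒜 (m - (Fin.snoc (fun i => df + d i) dl : Fin (n+1) → ℤ) i)) →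
          ∀ i, (e v : Fin (n + 1) → R) i ∈ 𝒜 (m - df - (Fin.snoc d dl : Fin (n+1) → ℤ) i)) ∧
      (∀ (m : ℤ) (w : LinearMap.ker (syzMap (Fin.snoc g gl))),
        (∀ i, (w : Fin (n + 1) → R) i ∈ 𝒜 (m - df - (Fin.snoc d dl : Fin (n+1) → ℤ) i)) →
          ∀ i, (e.symm w : Fin (n + 1) → R) i ∈
            𝒜 (m - (Fin.snoc (fun i => df + d i) dl : Fin (n+1) → ℤ) i)) := by
  have hdeg (m : ℤ) (i : Fin (n + 1)) :
      m - (Fin.snoc (fun i => df + d i) dl : Fin (n + 1) → ℤ) i =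
        (Fin.snoc 0 df : Fin (n + 1) → ℤ) i +
          (m - df - (Fin.snoc d dl : Fin (n + 1) → ℤ) i) := by
    induction i using Fin.lastCases <;> simp <;> ring
  have hmem (m : ℤ) (w : LinearMap.ker (syzMap (Fin.snoc g gl))) (i : Fin (n + 1)) :
      ((syzEquiv hreg₁ hreg₂).symm w : Fin (n + 1) → R) i ∈
          𝒜 (m - (Fin.snoc (fun i => df + d i) dl : Fin (n + 1) → ℤ) i) ↔
        (w : Fin (n + 1) → R) i ∈ 𝒜 (m - df - (Fin.snoc d dl : Fin (n + 1) → ℤ) i) := by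
    rw [coe_syzEquiv_symm_apply, Pi.mul_apply, hdeg]
    exact mul_mem_graded_iff_of_isSMulRegular 𝒜 (lastWeight_mem 𝒜 hf i)
      (isSMulRegular_lastWeight hreg₁ i)
  refine ⟨syzEquiv hreg₁ hreg₂, fun m v hv i => ?_, fun m w hw i => (hmem m w i).2 (hw i)⟩
  rw [← hmem, LinearEquiv.symm_apply_apply]
  exact hv i

/-- Over a standard-graded affine domain `R` over `k`,
for homogeneous elements `f, g₁, …, g_{n-1}, gₗ` such that `f, gₗ` is an
`R`-regular sequence (`f` is a nonzerodivisor and `gₗ` is a nonzerodivisor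
mod `f`), there is an isomorphism of graded `R`-modules
`Syz_R(f·g₁,…,f·g_{n-1}, gₗ) ≅ Syz_R(g₁,…,g_{n-1},gₗ)(-df)`. -/
theorem stmt_11 {k R : Type*} [Field k] [CommRing R] [IsDomain R] [Algebra k R]
    [Algebra.FiniteType k R] (𝒜 : ℤ → Submodule k R) [GradedAlgebra 𝒜]
    (hstd : Algebra.adjoin k ((𝒜 1 : Submodule k R) : Set R) = ⊤)
    {n : ℕ} (f : R) (df : ℤ) (hf : f ∈ 𝒜 df)
    (g : Fin n → R) (d : Fin n → ℤ) (hg : ∀ i, g i ∈ 𝒜 (d i))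
    (gl : R) (dl : ℤ) (hgl : gl ∈ 𝒜 dl)
    (hreg₁ : IsSMulRegular R f)
    (hreg₂ : IsSMulRegular (R ⧸ Ideal.span {f})
      (Ideal.Quotient.mk (Ideal.span {f}) gl)) :
    ∃ e : LinearMap.ker (syzMap (Fin.snoc (fun i => f * g i) gl)) ≃ₗ[R]
        LinearMap.ker (syzMap (Fin.snoc g gl)),
      (∀ (m : ℤ) (v : LinearMap.ker (syzMap (Fin.snoc (fun i => f * g i) gl))),
        (∀ i, (v : Fin (n + 1) → R) i ∈
            𝒜 (m - (Fin.snoc (fun i => df + d i) dl : Fin (n+1) → ℤ) i)) →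
          ∀ i, (e v : Fin (n + 1) → R) i ∈ 𝒜 (m - df - (Fin.snoc d dl : Fin (n+1) → ℤ) i)) ∧
      (∀ (m : ℤ) (w : LinearMap.ker (syzMap (Fin.snoc g gl))),
        (∀ i, (w : Fin (n + 1) → R) i ∈ 𝒜 (m - df - (Fin.snoc d dl : Fin (n+1) → ℤ) i)) →
          ∀ i, (e.symm w : Fin (n + 1) → R) i ∈
            𝒜 (m - (Fin.snoc (fun i => df + d i) dl : Fin (n+1) → ℤ) i)) :=
  stmt_11_general 𝒜 f df hf g d gl dl hreg₁ hreg₂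
end

section
/- Let k be a field, R = k[X,Y,Z] graded by deg X = α, deg Y = β, deg Z = γ (all positive), and let F be one of the ADE equations, homogeneous for this grading. Let φ: k[X,Y,Z]/(F) → k[U,V,W]/(F(U^α, V^β, W^γ)) be the k-algebra map X ↦ U^α, Y ↦ V^β, Z ↦ W^γ. Then for every q ≥ 1, dim_k (k[X,Y,Z]/(F, X^q, Y^q, Z^q)) = dim_k (k[U,V,W]/(F(U^α,V^β,W^γ), U^{αq}, V^{βq}, W^{γq})) / (α·β·γ). -/
/-!
Writing each exponent as `n i = w i * d i + e i` with `0 ≤ e i < w i` shows that `k[X]` is free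
over its image under `Xᵢ ↦ Xᵢ ^ wᵢ`, with basis the monomials `X ^ e`. Extending an ideal along
a free extension of rank `∏ wᵢ` multiplies the colength by `∏ wᵢ`; here `∏ wᵢ = αβγ`.
-/

open MvPolynomial Finsupp

noncomputable section

namespace Finsupp

variable {σ : Type*} [Finite σ] (w : σ → ℕ)

def divModEquiv (hw : ∀ i, 0 < w i) : (σ →₀ ℕ) ≃ (∀ i, Fin (w i)) × (σ →₀ ℕ) where
  toFun n := (fun i => ⟨n i % w i, Nat.mod_lt _ (hw i)⟩, equivFunOnFinite.symm fun i => n i / w i)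
  invFun p := equivFunOnFinite.symm fun i => w i * p.2 i + p.1 i
  left_inv n := by
    ext i
    simp [Nat.div_add_mod]
  right_inv p := by
    refine Prod.ext (funext fun i => Fin.ext ?_) (Finsupp.ext fun i => ?_)
    · simp [Nat.mod_eq_of_lt (p.1 i).isLt]
    · simp [Nat.mul_add_div (hw i), Nat.div_eq_of_lt (p.1 i).isLt]

def mulWeights (m : σ →₀ ℕ) : σ →₀ ℕ :=
  equivFunOnFinite.symm fun i => w i * m i

theorem divModEquiv_mulWeights_add (hw : ∀ i, 0 < w i) (m n : σ →₀ ℕ) :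
    divModEquiv w hw (mulWeights w m + n)
      = ((divModEquiv w hw n).1, m + (divModEquiv w hw n).2) := by
  refine Prod.ext (funext fun i => Fin.ext ?_) (Finsupp.ext fun i => ?_)
  · simp [divModEquiv, mulWeights]
  · simp [divModEquiv, mulWeights, Nat.mul_add_div (hw i)]

end Finsupp

theorem Module.finrank_fun_eq_card_mul {R M : Type*} (ι : Type*) [Semiring R]
    [StrongRankCondition R] [AddCommMonoid M] [Module R M] [Module.Free R M] [Fintype ι] :
    Module.finrank R (ι → M) = Fintype.card ι * Module.finrank R M := by
  rw [Module.finrank, Module.finrank, rank_fun_eq_lift_mul, Cardinal.toNat_mul,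
    Cardinal.toNat_natCast, Cardinal.toNat_lift]

namespace MvPolynomial

variable {σ R : Type*} [CommRing R]

def weightedExpand (w : σ → ℕ) : MvPolynomial σ R →ₐ[R] MvPolynomial σ R :=
  aeval fun i => X i ^ w i

theorem weightedExpand_X (w : σ → ℕ) (i : σ) :
    weightedExpand w (X i : MvPolynomial σ R) = X i ^ w i :=
  aeval_X _ _

theorem weightedExpand_monomial [Fintype σ] (w : σ → ℕ) (m : σ →₀ ℕ) (r : R) :
    weightedExpand w (monomial m r) = monomial (mulWeights w m) r := by
  rw [weightedExpand, aeval_monomial, monomial_eq, algebraMap_eq,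
    Finsupp.prod_fintype _ _ fun _ => pow_zero _, Finsupp.prod_fintype _ _ fun _ => pow_zero _]
  simp only [← pow_mul]
  rfl

section Repr

variable [Fintype σ] (w : σ → ℕ) (hw : ∀ i, 0 < w i)

/-- Coordinates in the basis `X ^ e`, `e i < w i`, of `MvPolynomial σ R` over the image of
`weightedExpand w`. -/
def weightedExpandRepr :
    MvPolynomial σ R ≃ₗ[R] ((∀ i, Fin (w i)) → MvPolynomial σ R) :=
  (AddMonoidAlgebra.coeffLinearEquiv R).trans (Finsupp.domLCongr (divModEquiv w hw))
    |>.trans (Finsupp.curryLinearEquiv R) |>.trans (Finsupp.linearEquivFunOnFinite R _ _)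
    |>.trans (LinearEquiv.piCongrRight fun _ => (AddMonoidAlgebra.coeffLinearEquiv R).symm)

theorem coeff_weightedExpandRepr (b : MvPolynomial σ R) (e : ∀ i, Fin (w i)) (m : σ →₀ ℕ) :
    coeff m (weightedExpandRepr w hw b e) = coeff ((divModEquiv w hw).symm (e, m)) b :=
  rfl

theorem weightedExpandRepr_monomial (n : σ →₀ ℕ) (r : R) (e : ∀ i, Fin (w i)) :
    weightedExpandRepr w hw (monomial n r) e
      = if e = (divModEquiv w hw n).1 then monomial (divModEquiv w hw n).2 r else 0 := by
  classical
  ext m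
  simp only [coeff_weightedExpandRepr, coeff_monomial, Equiv.eq_symm_apply, Prod.ext_iff,
    apply_ite (coeff m), coeff_zero]
  by_cases he : e = (divModEquiv w hw n).1 <;> simp [he, eq_comm]

theorem weightedExpandRepr_weightedExpand_mul (a b : MvPolynomial σ R) (e : ∀ i, Fin (w i)) :
    weightedExpandRepr w hw (weightedExpand w a * b) e = a * weightedExpandRepr w hw b e := by
  induction a using MvPolynomial.induction_on' with
  | add p p' hp hp' => simp only [map_add, add_mul, Pi.add_apply, hp, hp']
  | monomial m r =>
    induction b using MvPolynomial.induction_on' with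
    | add p p' hp hp' => simp only [mul_add, map_add, Pi.add_apply, hp, hp']
    | monomial n s =>
      rw [weightedExpand_monomial, monomial_mul, weightedExpandRepr_monomial,
        weightedExpandRepr_monomial, divModEquiv_mulWeights_add]
      simp only [mul_ite, monomial_mul, mul_zero]

theorem weightedExpandRepr_symm_single (e : ∀ i, Fin (w i)) (a : MvPolynomial σ R) :
    (weightedExpandRepr w hw).symm (Pi.single e a)
      = weightedExpand w a * monomial ((divModEquiv w hw).symm (e, 0)) 1 := by
  apply (weightedExpandRepr w hw).injective
  funext e'
  rw [LinearEquiv.apply_symm_apply, weightedExpandRepr_weightedExpand_mul,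
    weightedExpandRepr_monomial, Equiv.apply_symm_apply]
  simp [Pi.single_apply, mul_ite]

variable [DecidableEq σ]

theorem sum_weightedExpand_weightedExpandRepr (x : MvPolynomial σ R) :
    ∑ e, weightedExpand w (weightedExpandRepr w hw x e)
        * monomial ((divModEquiv w hw).symm (e, 0)) 1 = x := by
  conv_rhs => rw [← (weightedExpandRepr w hw).symm_apply_apply x,
    ← Finset.univ_sum_single (weightedExpandRepr w hw x), map_sum]
  exact Finset.sum_congr rfl fun e _ => (weightedExpandRepr_symm_single w hw e _).symm

def weightedExpandReprIdeal (I : Ideal (MvPolynomial σ R)) : Ideal (MvPolynomial σ R) where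
  carrier := {x | ∀ e, weightedExpandRepr w hw x e ∈ I}
  add_mem' hx hy e := by simpa only [map_add, Pi.add_apply] using I.add_mem (hx e) (hy e)
  zero_mem' e := by simp
  smul_mem' b x hx e := by
    rw [smul_eq_mul, ← sum_weightedExpand_weightedExpandRepr w hw x, Finset.mul_sum, map_sum,
      Finset.sum_apply]
    refine I.sum_mem fun e' _ => ?_
    rw [mul_left_comm, weightedExpandRepr_weightedExpand_mul]
    exact I.mul_mem_right _ (hx e')

theorem mem_map_weightedExpand_iff (I : Ideal (MvPolynomial σ R)) (x : MvPolynomial σ R) :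
    x ∈ I.map (weightedExpand w) ↔ ∀ e, weightedExpandRepr w hw x e ∈ I := by
  constructor
  · intro hx
    have hle : I.map (weightedExpand w) ≤ weightedExpandReprIdeal w hw I :=
      Ideal.map_le_iff_le_comap.mpr fun a ha e => by
        rw [← mul_one (weightedExpand w a), weightedExpandRepr_weightedExpand_mul]
        exact I.mul_mem_right _ ha
    exact hle hx
  · intro hx
    rw [← sum_weightedExpand_weightedExpandRepr w hw x]
    exact Ideal.sum_mem _ fun e _ => Ideal.mul_mem_right _ _ (Ideal.mem_map_of_mem _ (hx e))

def quotientMapWeightedExpandEquiv (I : Ideal (MvPolynomial σ R)) :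
    (MvPolynomial σ R ⧸ I.map (weightedExpand w)) ≃ₗ[R]
      ((∀ i, Fin (w i)) → MvPolynomial σ R ⧸ I) :=
  (Submodule.Quotient.restrictScalarsEquiv R _).symm ≪≫ₗ
    Submodule.Quotient.equiv _ (Submodule.pi Set.univ fun _ => I.restrictScalars R)
      (weightedExpandRepr w hw) (by
        ext y
        simp [Submodule.mem_map_equiv, mem_map_weightedExpand_iff w hw]) ≪≫ₗ
    Submodule.quotientPi _ ≪≫ₗ
    LinearEquiv.piCongrRight fun _ => Submodule.Quotient.restrictScalarsEquiv R _

end Repr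

theorem finrank_quotient_map_weightedExpand {k : Type*} [Field k] [Fintype σ] [DecidableEq σ]
    (w : σ → ℕ) (hw : ∀ i, 0 < w i) (I : Ideal (MvPolynomial σ k)) :
    Module.finrank k (MvPolynomial σ k ⧸ I.map (weightedExpand w))
      = (∏ i, w i) * Module.finrank k (MvPolynomial σ k ⧸ I) := by
  rw [(quotientMapWeightedExpandEquiv w hw I).finrank_eq, Module.finrank_fun_eq_card_mul,
    Fintype.card_pi]
  simp only [Fintype.card_fin]

end MvPolynomial

end

theorem stmt_17_general {k : Type*} [Field k] (α β γ : ℕ) (hα : 1 ≤ α) (hβ : 1 ≤ β)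
    (hγ : 1 ≤ γ) (F : MvPolynomial (Fin 3) k)
    (q : ℕ) :
    (Module.finrank k (MvPolynomial (Fin 3) k ⧸
        Ideal.span {F, X 0 ^ q, X 1 ^ q, X 2 ^ q}) : ℚ)
      = (Module.finrank k (MvPolynomial (Fin 3) k ⧸
          Ideal.span {aeval (fun i => (X i : MvPolynomial (Fin 3) k) ^ ![α, β, γ] i) F,
            X 0 ^ (α * q), X 1 ^ (β * q), X 2 ^ (γ * q)}) : ℚ)
        / (α * β * γ : ℚ) := by
  have hw : ∀ i, 0 < ![α, β, γ] i := by
    intro i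
    fin_cases i <;> simpa
  have hspan : Ideal.span {aeval (fun i => (X i : MvPolynomial (Fin 3) k) ^ ![α, β, γ] i) F,
        X 0 ^ (α * q), X 1 ^ (β * q), X 2 ^ (γ * q)}
      = (Ideal.span {F, X 0 ^ q, X 1 ^ q, X 2 ^ q}).map (weightedExpand ![α, β, γ]) := by
    rw [Ideal.map_span]
    simp only [Set.image_insert_eq, Set.image_singleton, map_pow, weightedExpand_X, ← pow_mul]
    rfl
  have hαβγ : (α * β * γ : ℚ) ≠ 0 := by positivity
  rw [hspan, finrank_quotient_map_weightedExpand _ hw, Fin.prod_univ_three]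
  push_cast
  field_simp

/-- Let `F` be one of the ADE equations, weighted
homogeneous for `deg X = α, deg Y = β, deg Z = γ`. Under the map
`X ↦ U^α, Y ↦ V^β, Z ↦ W^γ` into the standard-graded hypersurface
`k[U,V,W]/(F(U^α,V^β,W^γ))`, the Hilbert-Kunz type colengths are related by
`dim_k k[X,Y,Z]/(F,X^q,Y^q,Z^q)
  = dim_k k[U,V,W]/(F(U^α,V^β,W^γ),U^{αq},V^{βq},W^{γq}) / (αβγ)`. -/
theorem stmt_17 {k : Type*} [Field k] (α β γ : ℕ) (hα : 1 ≤ α) (hβ : 1 ≤ β)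
    (hγ : 1 ≤ γ) (F : MvPolynomial (Fin 3) k)
    (hADE : (∃ n : ℕ, F = X 0 ^ (n + 1) - X 1 * X 2) ∨
      (∃ n : ℕ, 4 ≤ n ∧ F = X 0 ^ 2 + X 1 ^ (n - 1) + X 1 * X 2 ^ 2) ∨
      F = X 0 ^ 2 + X 1 ^ 3 + X 2 ^ 4 ∨
      F = X 0 ^ 2 + X 1 ^ 3 + X 1 * X 2 ^ 3 ∨
      F = X 0 ^ 2 + X 1 ^ 3 + X 2 ^ 5)
    (hFhom : ∃ dF : ℕ, F.IsWeightedHomogeneous ![α, β, γ] dF)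
    (q : ℕ) (hq : 1 ≤ q) :
    (Module.finrank k (MvPolynomial (Fin 3) k ⧸
        Ideal.span {F, X 0 ^ q, X 1 ^ q, X 2 ^ q}) : ℚ)
      = (Module.finrank k (MvPolynomial (Fin 3) k ⧸
          Ideal.span {aeval (fun i => (X i : MvPolynomial (Fin 3) k) ^ ![α, β, γ] i) F,
            X 0 ^ (α * q), X 1 ^ (β * q), X 2 ^ (γ * q)}) : ℚ)
        / (α * β * γ : ℚ) :=
  stmt_17_general α β γ hα hβ hγ F q
end

section
/- Let k be a field and A₂ = k[U,V,W]/(U³ - VW). Then the syzygy modules Syz_{A₂}(U, W³) and Syz_{A₂}(U, W) are isomorphic as A₂-modules; explicitly, Syz_{A₂}(U, W³) is generated by τ₁ = (-W³, U) and τ₂ = (-U²W², V), which satisfy the relation V·τ₁ - U·τ₂ = 0. -/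
set_option maxHeartbeats 1000000
set_option synthInstance.maxHeartbeats 1000000

/-!
Over `R = k[V,W]` the ring `A₂ = R[U]/(U³ - VW)` is free with basis `1, U, U²`. Writing
`a = a₀ + a₁U + a₂U²`, `b = b₀ + b₁U + b₂U²` and comparing coefficients in `aU + bW³ = 0` gives
`a₀ = -b₁W³`, `a₁ = -b₂W³` and `V a₂ + W² b₀ = 0`; as `V` is prime and `V ∤ W`, `b₀ = cV` and
`a₂ = -cW²`, i.e. `(a, b) = (b₁ + b₂U)·τ₁ + c·τ₂`. Hence `W²` divides the first coordinate of every
syzygy of `(U, W³)`, and since `W²` is a non-zero-divisor (`A₂` is free over the domain `R`),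
`(x, y) ↦ (W²x, y)` is an isomorphism `Syz(U, W) ≅ Syz(U, W³)`.
-/

section Syzygy

variable {A : Type*} [CommRing A] {f g : A}

theorem mem_ker_syzMap_pair {s : Fin 2 → A} :
    s ∈ LinearMap.ker (syzMap ![f, g]) ↔ s 0 * f + s 1 * g = 0 := by
  simp [syzMap, Fin.sum_univ_two]

theorem span_pair_eq_ker_syzMap_pair {σ τ : Fin 2 → A} (hσ : σ 0 * f + σ 1 * g = 0)
    (hτ : τ 0 * f + τ 1 * g = 0)
    (h : ∀ a b : A, a * f + b * g = 0 →
      ∃ p q : A, p * σ 0 + q * τ 0 = a ∧ p * σ 1 + q * τ 1 = b) :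
    Submodule.span A {σ, τ} = LinearMap.ker (syzMap ![f, g]) := by
  refine le_antisymm (Submodule.span_le.mpr ?_) fun s hs => ?_
  · simp only [Set.insert_subset_iff, Set.singleton_subset_iff, SetLike.mem_coe,
      mem_ker_syzMap_pair]
    exact ⟨hσ, hτ⟩
  · obtain ⟨p, q, h₀, h₁⟩ := h _ _ (mem_ker_syzMap_pair.mp hs)
    refine Submodule.mem_span_pair.mpr ⟨p, q, funext fun i => ?_⟩
    fin_cases i <;> simpa

theorem nonempty_linearEquiv_ker_syzMap_mul {c : A} (hc : IsLeftRegular c)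
    (hdvd : ∀ s ∈ LinearMap.ker (syzMap ![f, c * g]), c ∣ s 0) :
    Nonempty (LinearMap.ker (syzMap ![f, c * g]) ≃ₗ[A] LinearMap.ker (syzMap ![f, g])) := by
  let scale := LinearMap.mulLeft A (![c, 1] : Fin 2 → A)
  have hmaps : ∀ s ∈ LinearMap.ker (syzMap ![f, g]),
      scale s ∈ LinearMap.ker (syzMap ![f, c * g]) := by
    intro s hs
    rw [mem_ker_syzMap_pair] at hs ⊢
    show c * s 0 * f + 1 * s 1 * (c * g) = 0
    linear_combination c * hs
  refine ⟨(LinearEquiv.ofBijective (scale.restrict hmaps)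
    ⟨fun s t hst => ?_, fun s => ?_⟩).symm⟩
  · have h := congrArg Subtype.val hst
    refine Subtype.ext (funext fun i => ?_)
    fin_cases i
    · exact hc (by simpa [scale] using congrFun h 0)
    · simpa [scale] using congrFun h 1
  · obtain ⟨x, hx⟩ := hdvd s s.2
    have hs := mem_ker_syzMap_pair.mp s.2
    have ht : ![x, s.1 1] ∈ LinearMap.ker (syzMap ![f, g]) := by
      rw [mem_ker_syzMap_pair]
      refine hc ?_
      show c * (x * f + s.1 1 * g) = c * 0
      linear_combination hs - f * hx
    refine ⟨⟨_, ht⟩, Subtype.ext (funext fun i => ?_)⟩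
    fin_cases i
    · simpa [scale] using hx.symm
    · simp [scale]

end Syzygy

open Polynomial

namespace AdjoinRoot

variable {R : Type*} [CommRing R] {f : R[X]}

noncomputable def cubicBasis (hf : f.Monic) (h3 : f.natDegree = 3) :
    Module.Basis (Fin 3) R (AdjoinRoot f) :=
  (powerBasis' hf).basis.reindex (finCongr h3)

theorem cubicBasis_apply (hf : f.Monic) (h3 : f.natDegree = 3) (i : Fin 3) :
    cubicBasis hf h3 i = root f ^ (i : ℕ) := by
  simp only [cubicBasis, Module.Basis.coe_reindex, PowerBasis.coe_basis, powerBasis'_gen,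
    Function.comp_apply]
  rfl

theorem exists_eq_add_mul_root_add_mul_root_sq (hf : f.Monic) (h3 : f.natDegree = 3)
    (s : AdjoinRoot f) :
    ∃ c₀ c₁ c₂ : R, s = of f c₀ + of f c₁ * root f + of f c₂ * root f ^ 2 := by
  let b := cubicBasis hf h3
  refine ⟨b.repr s 0, b.repr s 1, b.repr s 2, ?_⟩
  conv_lhs => rw [← b.sum_repr s]
  simp [b, cubicBasis_apply, Fin.sum_univ_three, Algebra.smul_def]

theorem eq_zero_of_add_mul_root_add_mul_root_sq_eq_zero (hf : f.Monic) (h3 : f.natDegree = 3)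
    {c₀ c₁ c₂ : R} (h : of f c₀ + of f c₁ * root f + of f c₂ * root f ^ 2 = 0) :
    c₀ = 0 ∧ c₁ = 0 ∧ c₂ = 0 := by
  have hc := Fintype.linearIndependent_iff.mp (cubicBasis hf h3).linearIndependent
    ![c₀, c₁, c₂] (by simpa [cubicBasis_apply, Fin.sum_univ_three, Algebra.smul_def] using h)
  exact ⟨hc 0, hc 1, hc 2⟩

theorem isLeftRegular_of (hf : f.Monic) {r : R} (hr : IsRegular r) : IsLeftRegular (of f r) := by
  have := hf.free_adjoinRoot
  intro x y hxy
  exact Module.Flat.isSMulRegular_of_isRegular hr (by simpa [Algebra.smul_def] using hxy)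

variable [IsDomain R] {v w : R}

theorem exists_of_mul_root_add_mul_of_pow_three_eq_zero (hv : Prime v) (hw : w ≠ 0)
    (hvw : ¬ v ∣ w) {a b : AdjoinRoot (X ^ 3 - C (v * w))} (hab : a * root _ + b * of _ w ^ 3 = 0) :
    ∃ p q, p * -(of _ w ^ 3) + q * -(root _ ^ 2 * of _ w ^ 2) = a ∧
      p * root _ + q * of _ v = b := by
  have hf : (X ^ 3 - C (v * w)).Monic := monic_X_pow_sub_C _ (by norm_num)
  have h3 : (X ^ 3 - C (v * w)).natDegree = 3 := natDegree_X_pow_sub_C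
  have hroot : root (X ^ 3 - C (v * w)) ^ 3 = of _ v * of _ w := by
    rw [← map_mul, ← sub_eq_zero, ← mk_X, ← mk_C, ← map_pow, ← map_sub, mk_self]
  obtain ⟨a₀, a₁, a₂, rfl⟩ := exists_eq_add_mul_root_add_mul_root_sq hf h3 a
  obtain ⟨b₀, b₁, b₂, rfl⟩ := exists_eq_add_mul_root_add_mul_root_sq hf h3 b
  obtain ⟨h₀, h₁, h₂⟩ : a₂ * (v * w) + b₀ * w ^ 3 = 0 ∧ a₀ + b₁ * w ^ 3 = 0 ∧
      a₁ + b₂ * w ^ 3 = 0 := by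
    refine eq_zero_of_add_mul_root_add_mul_root_sq_eq_zero hf h3 ?_
    simp only [map_add, map_mul, map_pow]
    linear_combination hab - of _ a₂ * hroot
  have h₀' : v * a₂ + w ^ 2 * b₀ = 0 := by
    refine (mul_eq_zero.mp ?_).resolve_left hw
    linear_combination h₀
  obtain ⟨c, rfl⟩ : v ∣ b₀ :=
    (hv.dvd_or_dvd (show v ∣ w ^ 2 * b₀ from ⟨-a₂, by linear_combination h₀'⟩)).resolve_left
      fun h => hvw (hv.dvd_of_dvd_pow h)
  have ha₂ : a₂ + w ^ 2 * c = 0 := by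
    refine (mul_eq_zero.mp ?_).resolve_left hv.ne_zero
    linear_combination h₀'
  refine ⟨of _ b₁ + of _ b₂ * root _, of _ c, ?_, ?_⟩
  · rw [eq_neg_of_add_eq_zero_left h₁, eq_neg_of_add_eq_zero_left h₂,
      eq_neg_of_add_eq_zero_left ha₂]
    simp only [map_neg, map_mul, map_pow]
    ring
  · simp only [map_mul]
    ring

end AdjoinRoot

noncomputable section

open MvPolynomial

abbrev RingA₂ (k : Type*) [Field k] : Type _ :=
  MvPolynomial (Fin 3) k ⧸ Ideal.span {(X 0 ^ 3 - X 1 * X 2 : MvPolynomial (Fin 3) k)}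

namespace RingA₂

variable (k : Type*) [Field k]

abbrev U : RingA₂ k := Ideal.Quotient.mk _ (X 0)
abbrev V : RingA₂ k := Ideal.Quotient.mk _ (X 1)
abbrev W : RingA₂ k := Ideal.Quotient.mk _ (X 2)

/-- `k[U,V,W]/(U³ - VW) ≅ k[V,W][U]/(U³ - VW)`, where `V, W` become the variables `X 0, X 1`
of `k[V,W]` and `U` the adjoined root. -/
def equivAdjoinRoot :
    RingA₂ k ≃+* AdjoinRoot (Polynomial.X ^ 3 - Polynomial.C (X 0 * X 1) :
      (MvPolynomial (Fin 2) k)[X]) :=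
  Ideal.quotientEquiv _ _ (finSuccEquiv k 2).toRingEquiv <| by
    rw [Ideal.map_span, Set.image_singleton]
    have h1 : (1 : Fin 3) = Fin.succ 0 := rfl
    have h2 : (2 : Fin 3) = Fin.succ 1 := rfl
    simp only [RingEquiv.coe_toRingHom, AlgEquiv.coe_ringEquiv,
      map_sub, map_pow, map_mul, h1, h2, finSuccEquiv_X_zero, finSuccEquiv_X_succ]

variable {k}

theorem equivAdjoinRoot_mk (p : MvPolynomial (Fin 3) k) :
    equivAdjoinRoot k (Ideal.Quotient.mk _ p) = AdjoinRoot.mk _ (finSuccEquiv k 2 p) :=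
  Ideal.quotientEquiv_mk _ _ _ _ p

@[simp] theorem equivAdjoinRoot_U : equivAdjoinRoot k (U k) = AdjoinRoot.root _ := by
  rw [equivAdjoinRoot_mk, finSuccEquiv_X_zero, AdjoinRoot.mk_X]

@[simp] theorem equivAdjoinRoot_V : equivAdjoinRoot k (V k) = AdjoinRoot.of _ (X 0) := by
  rw [equivAdjoinRoot_mk, show (1 : Fin 3) = Fin.succ 0 from rfl, finSuccEquiv_X_succ,
    AdjoinRoot.mk_C]

@[simp] theorem equivAdjoinRoot_W : equivAdjoinRoot k (W k) = AdjoinRoot.of _ (X 1) := by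
  rw [equivAdjoinRoot_mk, show (2 : Fin 3) = Fin.succ 1 from rfl, finSuccEquiv_X_succ,
    AdjoinRoot.mk_C]

theorem U_pow_three : U k ^ 3 = V k * W k := by
  rw [← map_pow, ← map_mul, Ideal.Quotient.eq]
  exact Ideal.subset_span rfl

theorem isLeftRegular_W_sq : IsLeftRegular (W k ^ 2) := by
  intro x y hxy
  apply (equivAdjoinRoot k).injective
  refine AdjoinRoot.isLeftRegular_of (monic_X_pow_sub_C _ (by norm_num))
    (IsRegular.of_ne_zero (pow_ne_zero 2 (X_ne_zero 1))) ?_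
  simpa using congrArg (equivAdjoinRoot k) hxy

theorem exists_syzygy {a b : RingA₂ k} (hab : a * U k + b * W k ^ 3 = 0) :
    ∃ p q, p * -(W k ^ 3) + q * -(U k ^ 2 * W k ^ 2) = a ∧ p * U k + q * V k = b := by
  have := congrArg (equivAdjoinRoot k) hab
  simp only [map_add, map_mul, map_pow, equivAdjoinRoot_U, equivAdjoinRoot_W, map_zero] at this
  obtain ⟨p, q, hp, hq⟩ := AdjoinRoot.exists_of_mul_root_add_mul_of_pow_three_eq_zero
    (v := (X 0 : MvPolynomial (Fin 2) k)) (w := X 1) X_prime (X_ne_zero 1) (by simp [X_dvd_X]) this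
  refine ⟨(equivAdjoinRoot k).symm p, (equivAdjoinRoot k).symm q,
    (equivAdjoinRoot k).injective ?_, (equivAdjoinRoot k).injective ?_⟩
  · simpa only [map_add, map_mul, map_neg, map_pow, RingEquiv.apply_symm_apply,
      equivAdjoinRoot_U, equivAdjoinRoot_W] using hp
  · simpa only [map_add, map_mul, RingEquiv.apply_symm_apply, equivAdjoinRoot_U,
      equivAdjoinRoot_V] using hq

end RingA₂

end

/-- Over `A₂ = k[U,V,W]/(U³ - VW)`, the syzygy modules
`Syz(U, W³)` and `Syz(U, W)` are isomorphic as `A₂`-modules; explicitly,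
`Syz(U, W³)` is generated by `τ₁ = (-W³, U)` and `τ₂ = (-U²W², V)`, which
satisfy `V·τ₁ - U·τ₂ = 0`. -/
theorem stmt_19 {k : Type*} [Field k] :
    let A₂ := MvPolynomial (Fin 3) k ⧸
      Ideal.span {MvPolynomial.X 0 ^ 3 - MvPolynomial.X 1 * MvPolynomial.X 2}
    let u : A₂ := Ideal.Quotient.mk _ (MvPolynomial.X 0)
    let v : A₂ := Ideal.Quotient.mk _ (MvPolynomial.X 1)
    let w : A₂ := Ideal.Quotient.mk _ (MvPolynomial.X 2)
    let τ₁ : Fin 2 → A₂ := ![-(w ^ 3), u]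
    let τ₂ : Fin 2 → A₂ := ![-(u ^ 2 * w ^ 2), v]
    Nonempty (LinearMap.ker (syzMap ![u, w ^ 3]) ≃ₗ[A₂]
        LinearMap.ker (syzMap ![u, w])) ∧
      Submodule.span A₂ {τ₁, τ₂} = LinearMap.ker (syzMap ![u, w ^ 3]) ∧
      v • τ₁ - u • τ₂ = 0 := by
  intro A₂ u v w τ₁ τ₂
  have hu : u ^ 3 = v * w := RingA₂.U_pow_three
  have hspan : Submodule.span A₂ {τ₁, τ₂} = LinearMap.ker (syzMap ![u, w ^ 3]) :=
    span_pair_eq_ker_syzMap_pair (show -(w ^ 3) * u + u * w ^ 3 = 0 by ring)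
      (show -(u ^ 2 * w ^ 2) * u + v * w ^ 3 = 0 by linear_combination -w ^ 2 * hu)
      fun _ _ hab => RingA₂.exists_syzygy hab
  refine ⟨?_, hspan, ?_⟩
  · rw [show w ^ 3 = w ^ 2 * w by ring]
    refine nonempty_linearEquiv_ker_syzMap_mul RingA₂.isLeftRegular_W_sq fun s hs => ?_
    rw [← pow_succ, ← hspan] at hs
    obtain ⟨p, q, rfl⟩ := Submodule.mem_span_pair.mp hs
    exact ⟨-(p * w) - q * u ^ 2,
      show p * -(w ^ 3) + q * -(u ^ 2 * w ^ 2) = w ^ 2 * (-(p * w) - q * u ^ 2) by ring⟩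
  · ext i
    fin_cases i
    · show v * -(w ^ 3) - u * -(u ^ 2 * w ^ 2) = 0
      linear_combination w ^ 2 * hu
    · show v * u - u * v = 0
      ring
end
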